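/- arXiv:2210.07722 — 12 statements merged into one kernel-verified Lean document; each statement's English description precedes it below -/
import Mathlib

section
/- Let G be a triangle-free graph (no C₃ as a subgraph) in which some vertex v has degree at least 4, and let a*, d*: V(G) → {0,1} be vertex weights. Then there is no pair of matchings D (of deletable edges of G) and A (of addable edges of the complement of G) such that G − D + A is a disjoint union of cliques. -/
open SimpleGraph

variable {V : Type*}

/-- A graph whose edge set is a matching: every vertex has at most one neighbour. -/
def IsMatchingGraph (M : SimpleGraph V) : Prop :=
  ∀ ⦃v w w' : V⦄, M.Adj v w → M.Adj v w' → w = w'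

/-- A cluster graph: every connected component is a complete graph. -/
def IsClusterGraph (G : SimpleGraph V) : Prop :=
  ∀ ⦃u v w : V⦄, G.Adj u v → G.Adj v w → u ≠ w → G.Adj u w

/-- No `C₃` (triangle) subgraph. -/
def TriangleFree (G : SimpleGraph V) : Prop :=
  ∀ ⦃u v w : V⦄, G.Adj u v → G.Adj v w → G.Adj u w → False

/-- No `C₄` subgraph. -/
def C4Free (G : SimpleGraph V) : Prop :=
  ∀ ⦃p q r s : V⦄, p ≠ r → q ≠ s →
    G.Adj p q → G.Adj q r → G.Adj r s → G.Adj s p → False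

/-- Degree of a vertex (as the cardinality of its neighbourhood). -/
noncomputable def ndeg (G : SimpleGraph V) (v : V) : ℕ := {w | G.Adj v w}.ncard

/-- Maximum degree at most `n`. -/
def MaxDegLE (G : SimpleGraph V) (n : ℕ) : Prop := ∀ v, ndeg G v ≤ n

/-- `D` is a matching of deletable edges of `G` (w.r.t. weights `d`). -/
def DelMatching (G D : SimpleGraph V) (d : V → ℕ) : Prop :=
  D ≤ G ∧ IsMatchingGraph D ∧ ∀ ⦃u v : V⦄, D.Adj u v → d u = 1 ∧ d v = 1

/-- `A` is a matching of addable edges of the complement of `G` (w.r.t. weights `a`). -/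
def AddMatching (G A : SimpleGraph V) (a : V → ℕ) : Prop :=
  A ≤ Gᶜ ∧ IsMatchingGraph A ∧ ∀ ⦃u v : V⦄, A.Adj u v → a u = 1 ∧ a v = 1

/-- `(G, a, d)` is a YES-instance of `(1,1)`-Cluster Editing (matching formulation). -/
def HasSolution (G : SimpleGraph V) (a d : V → ℕ) : Prop :=
  ∃ D A : SimpleGraph V, DelMatching G D d ∧ AddMatching G A a ∧
    IsClusterGraph ((G \ D) ⊔ A)

/-- The component `c` of `H` is a `P₁` (single vertex). -/
def P1Comp (H : SimpleGraph V) (c : H.ConnectedComponent) : Prop :=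
  ∃ v : V, c.supp = {v}

/-- The component `c` of `H` is a `P₂` (a single edge). -/
def P2Comp (H : SimpleGraph V) (c : H.ConnectedComponent) : Prop :=
  ∃ u v : V, H.Adj u v ∧ c.supp = {u, v}

/-- The component `c` of `H` is a path `u - m - w` on three vertices. -/
def P3Comp (H : SimpleGraph V) (c : H.ConnectedComponent) (u m w : V) : Prop :=
  H.Adj u m ∧ H.Adj m w ∧ u ≠ w ∧ ¬ H.Adj u w ∧ c.supp = {u, m, w}

/-- The component `c` of `H` is a chordless cycle `p - q - r - s - p` on four vertices. -/
def C4Comp (H : SimpleGraph V) (c : H.ConnectedComponent) (p q r s : V) : Prop :=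
  H.Adj p q ∧ H.Adj q r ∧ H.Adj r s ∧ H.Adj s p ∧ p ≠ r ∧ q ≠ s ∧
    ¬ H.Adj p r ∧ ¬ H.Adj q s ∧ c.supp = {p, q, r, s}

/-- Every connected component of `H` is isomorphic to `P₁`, `P₂`, `P₃` or `C₄`. -/
def GoodComponents (H : SimpleGraph V) : Prop :=
  ∀ c : H.ConnectedComponent,
    P1Comp H c ∨ P2Comp H c ∨ (∃ u m w, P3Comp H c u m w) ∨
      (∃ p q r s, C4Comp H c p q r s)

/-- `G` contains `K_{2,3}` as a subgraph. -/
def ContainsK23 (G : SimpleGraph V) : Prop :=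
  ∃ x₁ x₂ y₁ y₂ y₃ : V, x₁ ≠ x₂ ∧ y₁ ≠ y₂ ∧ y₁ ≠ y₃ ∧ y₂ ≠ y₃ ∧
    G.Adj x₁ y₁ ∧ G.Adj x₁ y₂ ∧ G.Adj x₁ y₃ ∧ G.Adj x₂ y₁ ∧ G.Adj x₂ y₂ ∧ G.Adj x₂ y₃

/-- a triangle-free graph with a vertex of degree at least 4
has no solution to (1,1)-Cluster Editing. -/
theorem stmt_1 {V : Type*} [Fintype V] [DecidableEq V] (G : SimpleGraph V)
    (a d : V → ℕ) (ha : ∀ v, a v ≤ 1) (hd : ∀ v, d v ≤ 1)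
    (hT : TriangleFree G) (v : V) (hv : 4 ≤ ndeg G v) :
    ¬ HasSolution G a d := by
  rintro ⟨D, A, ⟨hDG, hDm, hDd⟩, ⟨hAG, hAm, hAa⟩, hC⟩
  -- the set of G-neighbours of v not matched to v by D
  set S : Set V := {w | G.Adj v w ∧ ¬ D.Adj v w} with hS
  have hfin : S.Finite := Set.toFinite _
  have hS3 : 2 < S.ncard := by
    unfold ndeg at hv
    by_cases hex : ∃ w0, D.Adj v w0
    · obtain ⟨w0, hw0⟩ := hex
      have hsub : {w | G.Adj v w} ⊆ S ∪ {w0} := by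
        intro w hw
        by_cases h : D.Adj v w
        · right; exact (hDm h hw0)
        · left; exact ⟨hw, h⟩
      have := Set.ncard_le_ncard hsub (Set.toFinite _)
      have h2 := Set.ncard_union_le S {w0}
      simp only [Set.ncard_singleton] at h2
      omega
    · push_neg at hex
      have hsub : {w | G.Adj v w} ⊆ S := fun w hw => ⟨hw, hex w⟩
      have := Set.ncard_le_ncard hsub (Set.toFinite _)
      omega
  obtain ⟨w1, h1, w2, h2, w3, h3, h12, h13, h23⟩ := (Set.two_lt_ncard hfin).1 hS3
  -- each wi is adjacent to v in H := (G \ D) ⊔ A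
  have hH : ∀ w ∈ S, ((G \ D) ⊔ A).Adj v w := fun w hw =>
    Or.inl ⟨hw.1, hw.2⟩
  have key : ∀ w w', w ∈ S → w' ∈ S → w ≠ w' → A.Adj w w' := by
    intro w w' hw hw' hne
    have hadj : ((G \ D) ⊔ A).Adj w w' :=
      hC ((hH w hw).symm) (hH w' hw') hne
    rcases hadj with h | h
    · exact absurd h.1 (fun hg => hT hw.1 hg hw'.1)
    · exact h
  have hA12 := key w1 w2 h1 h2 h12
  have hA13 := key w1 w3 h1 h3 h13
  exact h23 (hAm hA12 hA13)
end

section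
/- Let G be a triangle-free graph with maximum degree at most 3 and vertex weights a*, d*: V(G) → {0,1}. Then (G, a*, d*) admits a solution to (1,1)-Cluster Editing if and only if there exists a matching D of deletable edges of G such that every connected component C of G − D is isomorphic to P₁, P₂, P₃, or C₄, and moreover: if C ≅ P₃ then the two endpoints u, w of the path are non-adjacent in G and satisfy a*(u)=a*(w)=1; and if C ≅ C₄ then both chords of the cycle are non-edges of G whose endpoints all have a*-value 1. -/
open SimpleGraph

variable {V : Type*}

/-!
Write `H = G \ D`. If `H ⊔ A` is a cluster graph, every component of `H` spans a clique of
`H ⊔ A`. As `H` is triangle-free, two `H`-neighbours of a vertex are joined by an edge of the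
matching `A`, so every vertex has at most two `H`-neighbours and at most one non-neighbour in its
component; hence the component is a `P₁`, `P₂`, `P₃` or `C₄` whose chords lie in `A` and are
addable. Conversely, the non-adjacent pairs inside the components of such an `H` are exactly these
chords, so they form a matching of addable edges completing every component to a clique.
-/

lemma TriangleFree.mono {G H : SimpleGraph V} (hT : TriangleFree G) (hHG : H ≤ G) :
    TriangleFree H := fun _ _ _ h₁ h₂ h₃ => hT (hHG h₁) (hHG h₂) (hHG h₃)

lemma IsClusterGraph.eq_or_adj_of_reachable {H : SimpleGraph V} (hH : IsClusterGraph H)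
    {x y : V} (h : H.Reachable x y) : x = y ∨ H.Adj x y := by
  obtain ⟨p⟩ := h
  induction p with
  | nil => exact Or.inl rfl
  | @cons u v w huv _ ih =>
    rcases ih with rfl | hvw
    · exact Or.inr huv
    · exact (eq_or_ne u w).imp id (hH huv hvw)

lemma IsClusterGraph.isClique_supp {H K : SimpleGraph V} (hK : IsClusterGraph K) (hHK : H ≤ K)
    (c : H.ConnectedComponent) : K.IsClique c.supp := fun _ hx _ hy hxy =>
  (hK.eq_or_adj_of_reachable ((c.reachable_of_mem_supp hx hy).mono hHK)).resolve_left hxy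

lemma isClusterGraph_fromRel_reachable (H : SimpleGraph V) :
    IsClusterGraph (fromRel H.Reachable) := by
  rintro u v w ⟨-, huv⟩ ⟨-, hvw⟩ huw
  exact ⟨huw, Or.inl ((huv.elim id .symm).trans (hvw.elim id .symm))⟩

section Classification

variable {H A : SimpleGraph V} {c : H.ConnectedComponent} {v w x y : V}

lemma p1Comp_of_forall_not_adj (hv : v ∈ c.supp) (h : ∀ w, ¬ H.Adj v w) : P1Comp H c := by
  refine ⟨v, Set.eq_singleton_iff_unique_mem.2 ⟨hv, fun z hz => ?_⟩⟩
  by_contra hzv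
  obtain ⟨p⟩ := c.reachable_of_mem_supp hv hz
  exact h _ (p.adj_snd (p.not_nil_of_ne (Ne.symm hzv)))

lemma eq_or_adj_or_adj_of_isClique (hc : (H ⊔ A).IsClique c.supp) (hv : v ∈ c.supp)
    (hx : x ∈ c.supp) : x = v ∨ H.Adj v x ∨ A.Adj v x :=
  (eq_or_ne x v).imp_right fun hxv => hc hv hx hxv.symm

lemma adj_of_adj_of_adj_of_isClique (hT : TriangleFree H) (hc : (H ⊔ A).IsClique c.supp)
    (hv : v ∈ c.supp) (hx : H.Adj v x) (hy : H.Adj v y) (hxy : x ≠ y) : A.Adj x y :=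
  (hc (c.mem_supp_of_adj_mem_supp hv hx) (c.mem_supp_of_adj_mem_supp hv hy) hxy).resolve_left
    fun h => hT hx h hy

lemma eq_or_eq_of_adj_of_isClique (hT : TriangleFree H) (hA : IsMatchingGraph A)
    (hc : (H ⊔ A).IsClique c.supp) (hv : v ∈ c.supp) (hw : H.Adj v w) (hx : H.Adj v x)
    (hxw : x ≠ w) (hy : H.Adj v y) : y = w ∨ y = x := by
  by_contra! h
  exact h.2 (hA (adj_of_adj_of_adj_of_isClique hT hc hv hw hx hxw.symm)
    (adj_of_adj_of_adj_of_isClique hT hc hv hw hy (Ne.symm h.1))).symm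

lemma p2Comp_or_p3Comp_of_unique_adj (hA : IsMatchingGraph A) (hc : (H ⊔ A).IsClique c.supp)
    (hv : v ∈ c.supp) (hw : H.Adj v w) (huniq : ∀ x, H.Adj v x → x = w) :
    P2Comp H c ∨ ∃ u m w, P3Comp H c u m w ∧ A.Adj u w := by
  have hw_mem := c.mem_supp_of_adj_mem_supp hv hw
  by_cases hu : ∃ u ∈ c.supp, u ≠ w ∧ A.Adj v u
  · obtain ⟨u, hu, huw, hvu⟩ := hu
    have hwu : H.Adj w u := (hc hw_mem hu (Ne.symm huw)).resolve_right
      fun h => hw.ne (hA h.symm hvu.symm).symm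
    refine Or.inr ⟨v, w, u, ⟨hw, hwu, hvu.ne, fun h => huw (huniq u h), ?_⟩, hvu⟩
    ext z
    simp only [Set.mem_insert_iff, Set.mem_singleton_iff]
    refine ⟨fun hz => ?_, by rintro (rfl | rfl | rfl) <;> assumption⟩
    rcases eq_or_adj_or_adj_of_isClique hc hv hz with rfl | h | h
    exacts [Or.inl rfl, Or.inr (Or.inl (huniq z h)), Or.inr (Or.inr (hA hvu h).symm)]
  · refine Or.inl ⟨v, w, hw, ?_⟩
    ext z
    simp only [Set.mem_insert_iff, Set.mem_singleton_iff]
    refine ⟨fun hz => ?_, by rintro (rfl | rfl) <;> assumption⟩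
    rcases eq_or_adj_or_adj_of_isClique hc hv hz with rfl | h | h
    · exact Or.inl rfl
    · exact Or.inr (huniq z h)
    · by_contra! hzw
      exact hu ⟨z, hz, hzw.2, h⟩

lemma p3Comp_or_c4Comp_of_two_adj (hT : TriangleFree H) (hA : IsMatchingGraph A)
    (hc : (H ⊔ A).IsClique c.supp) (hv : v ∈ c.supp) (hw : H.Adj v w) (hx : H.Adj v x)
    (hxw : x ≠ w) (hnbr : ∀ y, H.Adj v y → y = w ∨ y = x) :
    (∃ u m w, P3Comp H c u m w ∧ A.Adj u w) ∨
      ∃ p q r s, C4Comp H c p q r s ∧ A.Adj p r ∧ A.Adj q s := by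
  have hwx : A.Adj w x := adj_of_adj_of_adj_of_isClique hT hc hv hw hx hxw.symm
  have hnwx : ¬ H.Adj w x := fun h => hT hw h hx
  have hw_mem := c.mem_supp_of_adj_mem_supp hv hw
  have hx_mem := c.mem_supp_of_adj_mem_supp hv hx
  by_cases hu : ∃ u ∈ c.supp, A.Adj v u
  · obtain ⟨u, hu, hvu⟩ := hu
    have huw : u ≠ w := by
      rintro rfl
      exact hx.ne (hA hvu.symm hwx)
    have hux : u ≠ x := by
      rintro rfl
      exact hw.ne (hA hvu.symm hwx.symm)
    have hwu : H.Adj w u := (hc hw_mem hu (Ne.symm huw)).resolve_right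
      fun h => hux (hA hwx h).symm
    have hxu : H.Adj x u := (hc hx_mem hu (Ne.symm hux)).resolve_right
      fun h => huw (hA hwx.symm h).symm
    refine Or.inr ⟨v, w, u, x, ⟨hw, hwu, hxu.symm, hx.symm, hvu.ne, hxw.symm, ?_, hnwx, ?_⟩,
      hvu, hwx⟩
    · intro h
      rcases hnbr u h with rfl | rfl
      exacts [huw rfl, hux rfl]
    ext z
    simp only [Set.mem_insert_iff, Set.mem_singleton_iff]
    refine ⟨fun hz => ?_, by rintro (rfl | rfl | rfl | rfl) <;> assumption⟩
    rcases eq_or_adj_or_adj_of_isClique hc hv hz with rfl | h | h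
    · exact Or.inl rfl
    · rcases hnbr z h with rfl | rfl
      exacts [Or.inr (Or.inl rfl), Or.inr (Or.inr (Or.inr rfl))]
    · exact Or.inr (Or.inr (Or.inl (hA hvu h).symm))
  · refine Or.inl ⟨w, v, x, ⟨hw.symm, hx, hxw.symm, hnwx, ?_⟩, hwx⟩
    ext z
    simp only [Set.mem_insert_iff, Set.mem_singleton_iff]
    refine ⟨fun hz => ?_, by rintro (rfl | rfl | rfl) <;> assumption⟩
    rcases eq_or_adj_or_adj_of_isClique hc hv hz with rfl | h | h
    · exact Or.inr (Or.inl rfl)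
    · exact (hnbr z h).imp id Or.inr
    · exact absurd ⟨z, hz, h⟩ hu

theorem p1Comp_or_p2Comp_or_p3Comp_or_c4Comp_of_isClique (hT : TriangleFree H)
    (hA : IsMatchingGraph A) (hc : (H ⊔ A).IsClique c.supp) :
    P1Comp H c ∨ P2Comp H c ∨ (∃ u m w, P3Comp H c u m w ∧ A.Adj u w) ∨
      ∃ p q r s, C4Comp H c p q r s ∧ A.Adj p r ∧ A.Adj q s := by
  obtain ⟨v, rfl⟩ := c.exists_rep
  have hv : v ∈ (H.connectedComponentMk v).supp := rfl
  by_cases hisol : ∀ w, ¬ H.Adj v w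
  · exact Or.inl (p1Comp_of_forall_not_adj hv hisol)
  obtain ⟨w, hw⟩ := not_forall_not.1 hisol
  by_cases hx : ∃ x, H.Adj v x ∧ x ≠ w
  · obtain ⟨x, hx, hxw⟩ := hx
    exact Or.inr (Or.inr (p3Comp_or_c4Comp_of_two_adj hT hA hc hv hw hx hxw
      fun y hy => eq_or_eq_of_adj_of_isClique hT hA hc hv hw hx hxw hy))
  · push Not at hx
    exact Or.inr ((p2Comp_or_p3Comp_of_unique_adj hA hc hv hw hx).imp_right Or.inl)

end Classification

def Addable (G : SimpleGraph V) (a : V → ℕ) (x y : V) : Prop :=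
  ¬ G.Adj x y ∧ a x = 1 ∧ a y = 1

lemma Addable.of_sym2_eq {G : SimpleGraph V} {a : V → ℕ} {x y u w : V} (h : Addable G a u w)
    (e : s(x, y) = s(u, w)) : Addable G a x y := by
  rcases Sym2.eq_iff.1 e with ⟨rfl, rfl⟩ | ⟨rfl, rfl⟩
  · exact h
  · exact ⟨fun hxy => h.1 hxy.symm, h.2.2, h.2.1⟩

def CompletableComp (G : SimpleGraph V) (a : V → ℕ) {H : SimpleGraph V}
    (c : H.ConnectedComponent) : Prop :=
  P1Comp H c ∨ P2Comp H c ∨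
    (∃ u m w, P3Comp H c u m w ∧ ¬ G.Adj u w ∧ a u = 1 ∧ a w = 1) ∨
    (∃ p q r s, C4Comp H c p q r s ∧ ¬ G.Adj p r ∧ ¬ G.Adj q s ∧
      a p = 1 ∧ a q = 1 ∧ a r = 1 ∧ a s = 1)

section Shapes

variable {H : SimpleGraph V} {c : H.ConnectedComponent} {x y y' : V}

lemma P1Comp.eq_of_mem (h : P1Comp H c) (hx : x ∈ c.supp) (hy : y ∈ c.supp) : x = y := by
  obtain ⟨v, hv⟩ := h
  rw [hv] at hx hy
  exact hx.trans hy.symm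

lemma P2Comp.adj_of_mem (h : P2Comp H c) (hx : x ∈ c.supp) (hy : y ∈ c.supp) (hxy : x ≠ y) :
    H.Adj x y := by
  obtain ⟨u, v, huv, hc⟩ := h
  rw [hc] at hx hy
  simp only [Set.mem_insert_iff, Set.mem_singleton_iff] at hx hy
  rcases hx with rfl | rfl <;> rcases hy with rfl | rfl <;> simp_all [adj_comm]

lemma P3Comp.sym2_eq_of_not_adj {u m w : V} (h : P3Comp H c u m w) (hx : x ∈ c.supp)
    (hy : y ∈ c.supp) (hxy : x ≠ y) (hn : ¬ H.Adj x y) : s(x, y) = s(u, w) := by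
  obtain ⟨hum, hmw, -, -, hc⟩ := h
  rw [hc] at hx hy
  simp only [Set.mem_insert_iff, Set.mem_singleton_iff] at hx hy
  rcases hx with rfl | rfl | rfl <;> rcases hy with rfl | rfl | rfl <;> simp_all [adj_comm]

lemma C4Comp.sym2_eq_of_not_adj {p q r s : V} (h : C4Comp H c p q r s) (hx : x ∈ c.supp)
    (hy : y ∈ c.supp) (hxy : x ≠ y) (hn : ¬ H.Adj x y) :
    s(x, y) = s(p, r) ∨ s(x, y) = s(q, s) := by
  obtain ⟨hpq, hqr, hrs, hsp, -, -, -, -, hc⟩ := h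
  rw [hc] at hx hy
  simp only [Set.mem_insert_iff, Set.mem_singleton_iff] at hx hy
  rcases hx with rfl | rfl | rfl | rfl <;> rcases hy with rfl | rfl | rfl | rfl <;>
    simp_all [adj_comm]

lemma C4Comp.eq_of_not_adj {p q r s : V} (h : C4Comp H c p q r s) (hx : x ∈ c.supp)
    (hy : y ∈ c.supp) (hy' : y' ∈ c.supp) (hxy : x ≠ y) (hxy' : x ≠ y') (hn : ¬ H.Adj x y)
    (hn' : ¬ H.Adj x y') : y = y' := by
  obtain ⟨hpq, hqr, hrs, hsp, -, -, -, -, hc⟩ := h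
  rw [hc] at hx hy hy'
  simp only [Set.mem_insert_iff, Set.mem_singleton_iff] at hx hy hy'
  rcases hx with rfl | rfl | rfl | rfl <;> rcases hy with rfl | rfl | rfl | rfl <;>
    rcases hy' with rfl | rfl | rfl | rfl <;> simp_all [adj_comm]

variable {G : SimpleGraph V} {a : V → ℕ}

lemma CompletableComp.addable (h : CompletableComp G a c) (hx : x ∈ c.supp) (hy : y ∈ c.supp)
    (hxy : x ≠ y) (hn : ¬ H.Adj x y) : Addable G a x y := by
  rcases h with h | h | ⟨u, m, w, h, huw⟩ | ⟨p, q, r, s, h, npr, nqs, hp, hq, hr, hs⟩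
  · exact absurd (h.eq_of_mem hx hy) hxy
  · exact absurd (h.adj_of_mem hx hy hxy) hn
  · exact Addable.of_sym2_eq huw (h.sym2_eq_of_not_adj hx hy hxy hn)
  · rcases h.sym2_eq_of_not_adj hx hy hxy hn with e | e
    exacts [Addable.of_sym2_eq ⟨npr, hp, hr⟩ e, Addable.of_sym2_eq ⟨nqs, hq, hs⟩ e]

lemma CompletableComp.eq_of_not_adj (h : CompletableComp G a c) (hx : x ∈ c.supp)
    (hy : y ∈ c.supp) (hy' : y' ∈ c.supp) (hxy : x ≠ y) (hxy' : x ≠ y') (hn : ¬ H.Adj x y)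
    (hn' : ¬ H.Adj x y') : y = y' := by
  rcases h with h | h | ⟨u, m, w, h, -⟩ | ⟨p, q, r, s, h, -⟩
  · exact absurd (h.eq_of_mem hx hy) hxy
  · exact absurd (h.adj_of_mem hx hy hxy) hn
  · exact Sym2.congr_right.1
      ((h.sym2_eq_of_not_adj hx hy hxy hn).trans (h.sym2_eq_of_not_adj hx hy' hxy' hn').symm)
  · exact h.eq_of_not_adj hx hy hy' hxy hxy' hn hn'

end Shapes

lemma completableComp_of_isClusterGraph {G H A : SimpleGraph V} {a : V → ℕ}
    (hT : TriangleFree H) (hA : AddMatching G A a) (hcl : IsClusterGraph (H ⊔ A))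
    (c : H.ConnectedComponent) : CompletableComp G a c := by
  obtain ⟨hAG, hAm, hAa⟩ := hA
  have addable {x y : V} (h : A.Adj x y) : Addable G a x y :=
    ⟨((compl_adj G x y).1 (hAG h)).2, hAa h⟩
  rcases p1Comp_or_p2Comp_or_p3Comp_or_c4Comp_of_isClique hT hAm
      (hcl.isClique_supp le_sup_left c) with
    h | h | ⟨u, m, w, h, huw⟩ | ⟨p, q, r, s, h, hpr, hqs⟩
  · exact Or.inl h
  · exact Or.inr (Or.inl h)
  · exact Or.inr (Or.inr (Or.inl ⟨u, m, w, h, addable huw⟩))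
  · obtain ⟨npr, hp, hr⟩ := addable hpr
    obtain ⟨nqs, hq, hs⟩ := addable hqs
    exact Or.inr (Or.inr (Or.inr ⟨p, q, r, s, h, npr, nqs, hp, hq, hr, hs⟩))

lemma isClusterGraph_sup_fromRel_reachable_sdiff (H : SimpleGraph V) :
    IsClusterGraph (H ⊔ fromRel H.Reachable \ H) := by
  rw [sup_sdiff_cancel_right fun x y h => ⟨h.ne, Or.inl h.reachable⟩]
  exact isClusterGraph_fromRel_reachable H

lemma addMatching_fromRel_reachable_sdiff {G H : SimpleGraph V} {a : V → ℕ}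
    (h : ∀ c : H.ConnectedComponent, CompletableComp G a c) :
    AddMatching G (fromRel H.Reachable \ H) a := by
  have mem_supp {x y : V} (hxy : (fromRel H.Reachable \ H).Adj x y) :
      x ≠ y ∧ ¬ H.Adj x y ∧ y ∈ (H.connectedComponentMk x).supp :=
    ⟨hxy.1.1, hxy.2, ConnectedComponent.sound (hxy.1.2.elim .symm id)⟩
  refine ⟨fun x y hxy => ?_, fun x y y' hxy hxy' => ?_, fun x y hxy => ?_⟩
  · obtain ⟨hne, hn, hy⟩ := mem_supp hxy
    exact (compl_adj G x y).2 ⟨hne, ((h _).addable rfl hy hne hn).1⟩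
  · obtain ⟨hne, hn, hy⟩ := mem_supp hxy
    obtain ⟨hne', hn', hy'⟩ := mem_supp hxy'
    exact (h _).eq_of_not_adj rfl hy hy' hne hne' hn hn'
  · obtain ⟨hne, hn, hy⟩ := mem_supp hxy
    exact ((h _).addable rfl hy hne hn).2

theorem stmt_2_general {V : Type*} (G : SimpleGraph V) (a d : V → ℕ) (hT : TriangleFree G) :
    HasSolution G a d ↔
      ∃ D : SimpleGraph V, DelMatching G D d ∧
        ∀ c : (G \ D).ConnectedComponent,
          P1Comp (G \ D) c ∨ P2Comp (G \ D) c ∨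
          (∃ u m w, P3Comp (G \ D) c u m w ∧ ¬ G.Adj u w ∧ a u = 1 ∧ a w = 1) ∨
          (∃ p q r s, C4Comp (G \ D) c p q r s ∧ ¬ G.Adj p r ∧ ¬ G.Adj q s ∧
            a p = 1 ∧ a q = 1 ∧ a r = 1 ∧ a s = 1) := by
  constructor
  · rintro ⟨D, A, hD, hA, hcl⟩
    exact ⟨D, hD, completableComp_of_isClusterGraph (hT.mono sdiff_le) hA hcl⟩
  · rintro ⟨D, hD, hc⟩
    exact ⟨D, _, hD, addMatching_fromRel_reachable_sdiff hc,
      isClusterGraph_sup_fromRel_reachable_sdiff _⟩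

/-- characterization of YES-instances for triangle-free graphs of
maximum degree at most 3. -/
theorem stmt_2 {V : Type*} [Fintype V] [DecidableEq V] (G : SimpleGraph V)
    (a d : V → ℕ) (ha : ∀ v, a v ≤ 1) (hd : ∀ v, d v ≤ 1)
    (hT : TriangleFree G) (hdeg : MaxDegLE G 3) :
    HasSolution G a d ↔
      ∃ D : SimpleGraph V, DelMatching G D d ∧
        ∀ c : (G \ D).ConnectedComponent,
          P1Comp (G \ D) c ∨ P2Comp (G \ D) c ∨
          (∃ u m w, P3Comp (G \ D) c u m w ∧ ¬ G.Adj u w ∧ a u = 1 ∧ a w = 1) ∨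
          (∃ p q r s, C4Comp (G \ D) c p q r s ∧ ¬ G.Adj p r ∧ ¬ G.Adj q s ∧
            a p = 1 ∧ a q = 1 ∧ a r = 1 ∧ a s = 1) :=
  stmt_2_general G a d hT
end

section
/- Let G be a graph with maximum degree at most 3 that contains K_{2,3} as a subgraph, and let a*, d*: V(G) → {0,1} be any vertex weights. Then there is no matching D of deletable edges of G and matching A of addable edges of the complement of G such that G − D + A is a disjoint union of cliques. In other words, (G, a*, d*) is a NO-instance of (1,1)-Cluster Editing. -/
open SimpleGraph

variable {V : Type*}

lemma four_nbrs {V : Type*} [Fintype V] {G : SimpleGraph V} (hdeg : MaxDegLE G 3)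
    {v p q r s : V} (hab : p ≠ q) (hac : p ≠ r) (hae : p ≠ s) (hbc : q ≠ r)
    (hbe : q ≠ s) (hce : r ≠ s) (h1 : G.Adj v p) (h2 : G.Adj v q)
    (h3 : G.Adj v r) (h4 : G.Adj v s) : False := by
  have hsub : ({p, q, r, s} : Set V) ⊆ {w | G.Adj v w} := by
    simp only [Set.subset_def, Set.mem_insert_iff, Set.mem_singleton_iff]
    rintro w (rfl | rfl | rfl | rfl) <;> assumption
  have hcard : ({p, q, r, s} : Set V).ncard = 4 := by
    rw [Set.ncard_insert_of_notMem (by simp [hab, hac, hae]) (Set.toFinite _),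
        Set.ncard_insert_of_notMem (by simp [hbc, hbe]) (Set.toFinite _),
        Set.ncard_insert_of_notMem (by simp [hce]) (Set.toFinite _),
        Set.ncard_singleton]
  have hle := Set.ncard_le_ncard hsub (Set.toFinite _)
  have hv := hdeg v
  unfold ndeg at hv
  omega

/-- a graph of maximum degree at most 3 containing K_{2,3} is a
NO-instance of (1,1)-Cluster Editing for all vertex weights. -/
theorem stmt_6 {V : Type*} [Fintype V] [DecidableEq V] (G : SimpleGraph V)
    (hdeg : MaxDegLE G 3) (hK : ContainsK23 G)
    (a d : V → ℕ) (ha : ∀ v, a v ≤ 1) (hd : ∀ v, d v ≤ 1) :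
    ¬ HasSolution G a d := by

  rintro ⟨D, A, ⟨hDG, hDM, hDd⟩, ⟨hAG, hAM, hAa⟩, hH⟩
  obtain ⟨x₁, x₂, y₁, y₂, y₃, hx, h12, h13, h23, e11, e12, e13, e21, e22, e23⟩ := hK
  set H := (G \ D) ⊔ A with hHdef
  have leGD : G \ D ≤ H := le_sup_left
  have leA : A ≤ H := le_sup_right
  -- helper: not kept means deleted
  have hdel : ∀ {u w : V}, G.Adj u w → ¬ (G \ D).Adj u w → D.Adj u w := by
    intro u w hG hn
    by_contra hD
    exact hn ((SimpleGraph.sdiff_adj _ _ _ _).mpr ⟨hG, hD⟩)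
  -- a shared kept y exists
  have key : ((G \ D).Adj x₁ y₁ ∧ (G \ D).Adj x₂ y₁) ∨
      ((G \ D).Adj x₁ y₂ ∧ (G \ D).Adj x₂ y₂) ∨
      ((G \ D).Adj x₁ y₃ ∧ (G \ D).Adj x₂ y₃) := by
    by_contra hcon
    push_neg at hcon
    obtain ⟨c1, c2, c3⟩ := hcon
    have g1 : D.Adj x₁ y₁ ∨ D.Adj x₂ y₁ := by
      by_cases h : (G \ D).Adj x₁ y₁
      · exact Or.inr (hdel e21 (c1 h))
      · exact Or.inl (hdel e11 h)
    have g2 : D.Adj x₁ y₂ ∨ D.Adj x₂ y₂ := by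
      by_cases h : (G \ D).Adj x₁ y₂
      · exact Or.inr (hdel e22 (c2 h))
      · exact Or.inl (hdel e12 h)
    have g3 : D.Adj x₁ y₃ ∨ D.Adj x₂ y₃ := by
      by_cases h : (G \ D).Adj x₁ y₃
      · exact Or.inr (hdel e23 (c3 h))
      · exact Or.inl (hdel e13 h)
    rcases g1 with g1 | g1 <;> rcases g2 with g2 | g2 <;> rcases g3 with g3 | g3
    · exact h12 (hDM g1 g2)
    · exact h12 (hDM g1 g2)
    · exact h13 (hDM g1 g3)
    · exact h23 (hDM g2 g3)
    · exact h23 (hDM g2 g3)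
    · exact h13 (hDM g1 g3)
    · exact h12 (hDM g1 g2)
    · exact h12 (hDM g1 g2)
  have hHx : H.Adj x₁ x₂ := by
    rcases key with ⟨k1, k2⟩ | ⟨k1, k2⟩ | ⟨k1, k2⟩ <;>
      exact hH (leGD k1) (leGD k2).symm hx
  -- x₁ x₂ not adjacent in G
  have hnGx : ¬ G.Adj x₁ x₂ := fun h =>
    four_nbrs hdeg h12 h13 e21.ne' h23 e22.ne' e23.ne' e11 e12 e13 h
  have hAx : A.Adj x₁ x₂ := by
    rcases (SimpleGraph.sup_adj _ _ _ _).mp hHx with h | h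
    · exact absurd h.1 hnGx
    · exact h
  -- all y's H-adjacent to x₁
  have hH1 : ∀ {k : V}, G.Adj x₁ k → G.Adj x₂ k → H.Adj x₁ k := by
    intro k hk1 hk2
    by_cases hkeep : (G \ D).Adj x₁ k
    · exact leGD hkeep
    · have hD1 : D.Adj x₁ k := hdel hk1 hkeep
      have hkeep2 : (G \ D).Adj x₂ k := by
        refine (SimpleGraph.sdiff_adj _ _ _ _).mpr ⟨hk2, fun hD2 => ?_⟩
        exact hx (hDM hD1.symm hD2.symm)
      exact hH hHx (leGD hkeep2) hk1.ne
  have hHy1 : H.Adj x₁ y₁ := hH1 e11 e21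
  have hHy2 : H.Adj x₁ y₂ := hH1 e12 e22
  have hHy3 : H.Adj x₁ y₃ := hH1 e13 e23
  have hY12 : H.Adj y₁ y₂ := hH hHy1.symm hHy2 h12
  have hY13 : H.Adj y₁ y₃ := hH hHy1.symm hHy3 h13
  have hY23 : H.Adj y₂ y₃ := hH hHy2.symm hHy3 h23
  -- each y has an A-edge to another y
  have a1 : A.Adj y₁ y₂ ∨ A.Adj y₁ y₃ := by
    rcases (SimpleGraph.sup_adj _ _ _ _).mp hY12 with h | h
    · rcases (SimpleGraph.sup_adj _ _ _ _).mp hY13 with h' | h'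
      · exact absurd h'.1 fun hg =>
          four_nbrs hdeg hx e12.ne e13.ne e22.ne e23.ne h23 e11.symm e21.symm h.1 hg
      · exact Or.inr h'
    · exact Or.inl h
  have a2 : A.Adj y₂ y₁ ∨ A.Adj y₂ y₃ := by
    rcases (SimpleGraph.sup_adj _ _ _ _).mp hY12.symm with h | h
    · rcases (SimpleGraph.sup_adj _ _ _ _).mp hY23 with h' | h'
      · exact absurd h'.1 fun hg =>
          four_nbrs hdeg hx e11.ne e13.ne e21.ne e23.ne h13 e12.symm e22.symm h.1 hg
      · exact Or.inr h'
    · exact Or.inl h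
  have a3 : A.Adj y₃ y₁ ∨ A.Adj y₃ y₂ := by
    rcases (SimpleGraph.sup_adj _ _ _ _).mp hY13.symm with h | h
    · rcases (SimpleGraph.sup_adj _ _ _ _).mp hY23.symm with h' | h'
      · exact absurd h'.1 fun hg =>
          four_nbrs hdeg hx e11.ne e12.ne e21.ne e22.ne h12 e13.symm e23.symm h.1 hg
      · exact Or.inr h'
    · exact Or.inl h
  rcases a1 with a1 | a1
  · rcases a3 with a3 | a3
    · exact h23 (hAM a1 a3.symm)
    · exact h13 (hAM a1.symm a3.symm)
  · rcases a2 with a2 | a2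
    · exact h23 (hAM a1 a2.symm).symm
    · exact h12 (hAM a1.symm a2.symm)
end

section
/- Let H be a graph on 5 vertices with maximum degree at most 3 containing K_{2,3} as a subgraph, and let v be a vertex of H of degree 2. Then for any matching M in H, the graph H − M is connected, and any graph obtained from H by adding at most one edge incident to each vertex and deleting the matching M is not a complete graph on V(H). -/
open SimpleGraph

variable {V : Type*}

lemma four_nbrs_s7 {V : Type*} [Fintype V] (H : SimpleGraph V) (hdeg : MaxDegLE H 3)
    {u a b c d : V} (hab : a ≠ b) (hac : a ≠ c) (had : a ≠ d) (hbc : b ≠ c)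
    (hbd : b ≠ d) (hcd : c ≠ d)
    (ha : H.Adj u a) (hb : H.Adj u b) (hc : H.Adj u c) (hd : H.Adj u d) : False := by
  have hsub : ({a, b, c, d} : Set V) ⊆ {w | H.Adj u w} := by
    intro w hw
    simp only [Set.mem_insert_iff, Set.mem_singleton_iff] at hw
    rcases hw with rfl | rfl | rfl | rfl <;> assumption
  have h4 : ({a, b, c, d} : Set V).ncard = 4 := by
    rw [Set.ncard_insert_of_notMem (by simp [hab, hac, had]) (Set.toFinite _),
        Set.ncard_insert_of_notMem (by simp [hbc, hbd]) (Set.toFinite _),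
        Set.ncard_insert_of_notMem (by simp [hcd]) (Set.toFinite _),
        Set.ncard_singleton]
  have h1 := Set.ncard_le_ncard hsub (Set.toFinite _)
  have h2 := hdeg u
  unfold ndeg at h2
  omega

/-- for a 5-vertex graph H of max degree ≤ 3 containing K_{2,3}
(with a degree-2 vertex v), H − M is connected for every matching M, and
deleting M and adding a matching of new edges never yields the complete graph. -/
theorem stmt_7 {V : Type*} [Fintype V] [DecidableEq V] (H : SimpleGraph V)
    (hcard : Fintype.card V = 5) (hdeg : MaxDegLE H 3) (hK : ContainsK23 H)
    (v : V) (hv : ndeg H v = 2) :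
    ∀ M : SimpleGraph V, M ≤ H → IsMatchingGraph M →
      (H \ M).Connected ∧
      ∀ A : SimpleGraph V, A ≤ Hᶜ → IsMatchingGraph A →
        (H \ M) ⊔ A ≠ (⊤ : SimpleGraph V) := by
  obtain ⟨x₁, x₂, y₁, y₂, y₃, hx, h12, h13, h23, a11, a12, a13, a21, a22, a23⟩ := hK
  intro M hMH hM
  -- distinctness facts
  have dx1y1 : x₁ ≠ y₁ := a11.ne
  have dx1y2 : x₁ ≠ y₂ := a12.ne
  have dx1y3 : x₁ ≠ y₃ := a13.ne
  have dx2y1 : x₂ ≠ y₁ := a21.ne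
  have dx2y2 : x₂ ≠ y₂ := a22.ne
  have dx2y3 : x₂ ≠ y₃ := a23.ne
  -- every vertex is one of the five
  have huniv : ∀ u : V, u = x₁ ∨ u = x₂ ∨ u = y₁ ∨ u = y₂ ∨ u = y₃ := by
    have hcard5 : ({x₁, x₂, y₁, y₂, y₃} : Finset V).card = 5 := by
      rw [Finset.card_insert_of_notMem (by simp [hx, dx1y1, dx1y2, dx1y3]),
          Finset.card_insert_of_notMem (by simp [dx2y1, dx2y2, dx2y3]),
          Finset.card_insert_of_notMem (by simp [h12, h13]),
          Finset.card_insert_of_notMem (by simp [h23]), Finset.card_singleton]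
    have hs : ({x₁, x₂, y₁, y₂, y₃} : Finset V) = Finset.univ :=
      Finset.eq_univ_of_card _ (hcard5.trans hcard.symm)
    intro u
    have hu : u ∈ ({x₁, x₂, y₁, y₂, y₃} : Finset V) := hs ▸ Finset.mem_univ u
    simpa using hu
  -- two missing edges among the y's, sharing a vertex
  have hne : ∃ a b c : V, a ≠ b ∧ a ≠ c ∧ b ≠ c ∧ ¬H.Adj a b ∧ ¬H.Adj a c := by
    by_cases e12 : H.Adj y₁ y₂
    · have e13 : ¬H.Adj y₁ y₃ := fun h =>
        four_nbrs_s7 H hdeg hx dx1y2 dx1y3 dx2y2 dx2y3 h23 a11.symm a21.symm e12 h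
      have e23 : ¬H.Adj y₂ y₃ := fun h =>
        four_nbrs_s7 H hdeg hx dx1y1 dx1y3 dx2y1 dx2y3 h13 a12.symm a22.symm e12.symm h
      exact ⟨y₃, y₁, y₂, h13.symm, h23.symm, h12, fun h => e13 h.symm, fun h => e23 h.symm⟩
    · by_cases e13 : H.Adj y₁ y₃
      · have e23 : ¬H.Adj y₂ y₃ := fun h =>
          four_nbrs_s7 H hdeg hx dx1y1 dx1y2 dx2y1 dx2y2 h12 a13.symm a23.symm e13.symm h.symm
        exact ⟨y₂, y₁, y₃, h12.symm, h23, h13, fun h => e12 h.symm, e23⟩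
      · exact ⟨y₁, y₂, y₃, h12, h13, h23, e12, e13⟩
  -- a common surviving neighbour of x₁ and x₂
  obtain ⟨c, hc1, hc2⟩ : ∃ c, (H \ M).Adj x₁ c ∧ (H \ M).Adj x₂ c := by
    simp only [SimpleGraph.sdiff_adj]
    by_cases m11 : M.Adj x₁ y₁
    · by_cases m22 : M.Adj x₂ y₂
      · exact ⟨y₃, ⟨a13, fun h => h13 (hM m11 h)⟩, ⟨a23, fun h => h23 (hM m22 h)⟩⟩
      · exact ⟨y₂, ⟨a12, fun h => h12 (hM m11 h)⟩, ⟨a22, m22⟩⟩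
    · by_cases m21 : M.Adj x₂ y₁
      · by_cases m12 : M.Adj x₁ y₂
        · exact ⟨y₃, ⟨a13, fun h => h23 (hM m12 h)⟩, ⟨a23, fun h => h13 (hM m21 h)⟩⟩
        · exact ⟨y₂, ⟨a12, m12⟩, ⟨a22, fun h => h12 (hM m21 h)⟩⟩
      · exact ⟨y₁, ⟨a11, m11⟩, ⟨a21, m21⟩⟩
  -- every y survives with an edge to x₁ or x₂, hence reaches c
  have hry : ∀ z, H.Adj x₁ z → H.Adj x₂ z → (H \ M).Reachable z c := by
    intro z h1 h2
    by_cases mz : M.Adj x₁ z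
    · have hz2 : ¬M.Adj x₂ z := fun h => hx (hM mz.symm h.symm)
      exact ((SimpleGraph.sdiff_adj _ _ _ _).mpr ⟨h2, hz2⟩).symm.reachable.trans hc2.reachable
    · exact ((SimpleGraph.sdiff_adj _ _ _ _).mpr ⟨h1, mz⟩).symm.reachable.trans hc1.reachable
  have hr : ∀ u, (H \ M).Reachable u c := by
    intro u
    rcases huniv u with rfl | rfl | rfl | rfl | rfl
    · exact hc1.reachable
    · exact hc2.reachable
    · exact hry _ a11 a21
    · exact hry _ a12 a22
    · exact hry _ a13 a23
  constructor
  · have : Nonempty V := ⟨x₁⟩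
    exact ⟨fun u w => (hr u).trans (hr w).symm⟩
  · intro A hAc hAm heq
    obtain ⟨a, b, c', hab, hac, hbc, nb, nc⟩ := hne
    have tb : ((H \ M) ⊔ A).Adj a b := by rw [heq]; simpa using hab
    have tc : ((H \ M) ⊔ A).Adj a c' := by rw [heq]; simpa using hac
    have Ab : A.Adj a b := by
      rcases tb with h | h
      · exact absurd ((SimpleGraph.sdiff_adj _ _ _ _).mp h).1 nb
      · exact h
    have Ac : A.Adj a c' := by
      rcases tc with h | h
      · exact absurd ((SimpleGraph.sdiff_adj _ _ _ _).mp h).1 nc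
      · exact h
    exact hbc (hAm Ab Ac)
end

section
/- Let G be a triangle-free graph with maximum degree at most 3, let D be a matching in G such that every connected component of G − D is isomorphic to P₁, P₂, P₃, or C₄, and let C' = u₁u₂u₃u₄u₁ be any 4-cycle in G. Then either no edge of C' belongs to D, or exactly two edges of C' belong to D and these two edges are non-adjacent (i.e., form a perfect matching of the 4-cycle). -/
open SimpleGraph

variable {V : Type*}

lemma one_edge_absurd {V : Type*} [Fintype V] [DecidableEq V] (G D : SimpleGraph V)
    (hT : TriangleFree G) (hcomp : GoodComponents (G \ D))
    (u₁ u₂ u₃ u₄ : V) (h13 : u₁ ≠ u₃) (h24 : u₂ ≠ u₄)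
    (h12 : G.Adj u₁ u₂) (h23 : G.Adj u₂ u₃) (h34 : G.Adj u₃ u₄) (h41 : G.Adj u₄ u₁)
    (d12 : D.Adj u₁ u₂) (d23 : ¬D.Adj u₂ u₃) (d34 : ¬D.Adj u₃ u₄)
    (d41 : ¬D.Adj u₄ u₁) : False := by
  have H23 : (G \ D).Adj u₂ u₃ := (SimpleGraph.sdiff_adj _ _ _ _).mpr ⟨h23, d23⟩
  have H34 : (G \ D).Adj u₃ u₄ := (SimpleGraph.sdiff_adj _ _ _ _).mpr ⟨h34, d34⟩
  have H41 : (G \ D).Adj u₄ u₁ := (SimpleGraph.sdiff_adj _ _ _ _).mpr ⟨h41, d41⟩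
  have n12 : u₁ ≠ u₂ := h12.ne
  have n23 : u₂ ≠ u₃ := h23.ne
  have n34 : u₃ ≠ u₄ := h34.ne
  have n41 : u₄ ≠ u₁ := h41.ne
  have nc13 : ¬G.Adj u₁ u₃ := fun h => hT h12 h23 h
  have nc24 : ¬G.Adj u₂ u₄ := fun h => hT h23 h34 h
  set c := (G \ D).connectedComponentMk u₂ with hc
  have m2 : u₂ ∈ c.supp := rfl
  have m3 : u₃ ∈ c.supp := SimpleGraph.ConnectedComponent.sound H23.symm.reachable
  have m4 : u₄ ∈ c.supp :=
    SimpleGraph.ConnectedComponent.sound (H34.symm.reachable.trans H23.symm.reachable)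
  have m1 : u₁ ∈ c.supp :=
    SimpleGraph.ConnectedComponent.sound
      (H41.symm.reachable.trans (H34.symm.reachable.trans H23.symm.reachable))
  rcases hcomp c with ⟨v, hv⟩ | ⟨a, b, hab, hv⟩ | ⟨a, m, b, _, _, _, _, hv⟩ |
      ⟨p, q, r, s, hpq, hqr, hrs, hsp, hpr, hqs, _, _, hv⟩
  · rw [hv] at m2 m3
    simp only [Set.mem_singleton_iff] at m2 m3
    exact n23 (m2.trans m3.symm)
  · rw [hv] at m2 m3 m4
    simp only [Set.mem_insert_iff, Set.mem_singleton_iff] at m2 m3 m4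
    rcases m2 with rfl | rfl <;> rcases m3 with rfl | rfl <;> rcases m4 with h | h <;>
      simp_all
  · rw [hv] at m1 m2 m3 m4
    simp only [Set.mem_insert_iff, Set.mem_singleton_iff] at m1 m2 m3 m4
    rcases m1 with rfl | rfl | rfl <;> rcases m2 with h2 | h2 | h2 <;>
      rcases m3 with h3 | h3 | h3 <;> rcases m4 with h4 | h4 | h4 <;> simp_all
  · -- the component is a 4-cycle {p,q,r,s}
    have hsub : ({u₁, u₂, u₃, u₄} : Set V) ⊆ c.supp := by
      intro x hx
      simp only [Set.mem_insert_iff, Set.mem_singleton_iff] at hx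
      rcases hx with rfl | rfl | rfl | rfl <;> assumption
    have hcardu : ({u₁, u₂, u₃, u₄} : Set V).ncard = 4 := by
      rw [Set.ncard_insert_of_notMem (by simp [n12, h13, n41.symm]),
        Set.ncard_insert_of_notMem (by simp [n23, h24]),
        Set.ncard_insert_of_notMem (by simp [n34]), Set.ncard_singleton]
    have hcardp : ({p, q, r, s} : Set V).ncard ≤ 4 := by
      refine le_trans (Set.ncard_insert_le _ _) ?_
      refine Nat.succ_le_succ (le_trans (Set.ncard_insert_le _ _) ?_)
      refine Nat.succ_le_succ (le_trans (Set.ncard_insert_le _ _) ?_)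
      simp [Set.ncard_singleton]
    have heq : ({u₁, u₂, u₃, u₄} : Set V) = c.supp := by
      refine Set.eq_of_subset_of_ncard_le hsub ?_ (Set.toFinite _)
      rw [hv, hcardu]; exact hcardp
    have key : ∀ x, (G \ D).Adj u₂ x → x ∈ c.supp → x = u₃ := by
      intro x hx hmem
      rw [← heq] at hmem
      simp only [Set.mem_insert_iff, Set.mem_singleton_iff] at hmem
      obtain ⟨hxG, hxD⟩ := (SimpleGraph.sdiff_adj _ _ _ _).mp hx
      rcases hmem with rfl | rfl | rfl | rfl
      · exact absurd d12.symm hxD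
      · exact absurd hxG (G.irrefl)
      · rfl
      · exact absurd hxG nc24
    have memsupp : ∀ x : V, x ∈ ({p, q, r, s} : Set V) → x ∈ c.supp := by
      intro x hx; rw [hv]; exact hx
    rw [hv] at m2
    simp only [Set.mem_insert_iff, Set.mem_singleton_iff] at m2
    rcases m2 with rfl | rfl | rfl | rfl
    · exact hqs ((key q hpq (memsupp q (by simp))).trans
        (key s hsp.symm (memsupp s (by simp))).symm)
    · exact hpr ((key p hpq.symm (memsupp p (by simp))).trans
        (key r hqr (memsupp r (by simp))).symm)
    · exact hqs ((key q hqr.symm (memsupp q (by simp))).trans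
        (key s hrs (memsupp s (by simp))).symm)
    · exact hpr ((key p hsp (memsupp p (by simp))).trans
        (key r hrs.symm (memsupp r (by simp))).symm)

/-- Claim A: for any 4-cycle of G, either no or exactly two
(non-adjacent) of its edges belong to D. -/
theorem stmt_8 {V : Type*} [Fintype V] [DecidableEq V] (G D : SimpleGraph V)
    (hT : TriangleFree G) (hdeg : MaxDegLE G 3)
    (hDG : D ≤ G) (hM : IsMatchingGraph D) (hcomp : GoodComponents (G \ D))
    (u₁ u₂ u₃ u₄ : V) (h13 : u₁ ≠ u₃) (h24 : u₂ ≠ u₄)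
    (h12 : G.Adj u₁ u₂) (h23 : G.Adj u₂ u₃) (h34 : G.Adj u₃ u₄)
    (h41 : G.Adj u₄ u₁) :
    (¬ D.Adj u₁ u₂ ∧ ¬ D.Adj u₂ u₃ ∧ ¬ D.Adj u₃ u₄ ∧ ¬ D.Adj u₄ u₁) ∨
    (D.Adj u₁ u₂ ∧ D.Adj u₃ u₄ ∧ ¬ D.Adj u₂ u₃ ∧ ¬ D.Adj u₄ u₁) ∨
    (D.Adj u₂ u₃ ∧ D.Adj u₄ u₁ ∧ ¬ D.Adj u₁ u₂ ∧ ¬ D.Adj u₃ u₄) := by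
  have e12_23 : D.Adj u₁ u₂ → D.Adj u₂ u₃ → False := fun a b => h13 (hM a.symm b)
  have e23_34 : D.Adj u₂ u₃ → D.Adj u₃ u₄ → False := fun a b => h24 (hM a.symm b)
  have e34_41 : D.Adj u₃ u₄ → D.Adj u₄ u₁ → False := fun a b => h13 (hM a.symm b).symm
  have e41_12 : D.Adj u₄ u₁ → D.Adj u₁ u₂ → False := fun a b => h24 (hM a.symm b).symm
  by_cases d12 : D.Adj u₁ u₂ <;> by_cases d23 : D.Adj u₂ u₃ <;>
    by_cases d34 : D.Adj u₃ u₄ <;> by_cases d41 : D.Adj u₄ u₁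
  all_goals first
  | exact (e12_23 d12 d23).elim
  | exact (e23_34 d23 d34).elim
  | exact (e34_41 d34 d41).elim
  | exact (e41_12 d41 d12).elim
  | exact Or.inl ⟨d12, d23, d34, d41⟩
  | exact Or.inr (Or.inl ⟨d12, d34, d23, d41⟩)
  | exact Or.inr (Or.inr ⟨d23, d41, d12, d34⟩)
  | exact (one_edge_absurd G D hT hcomp u₁ u₂ u₃ u₄ h13 h24 h12 h23 h34 h41
      d12 d23 d34 d41).elim
  | exact (one_edge_absurd G D hT hcomp u₂ u₃ u₄ u₁ h24 h13.symm h23 h34 h41 h12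
      d23 d34 d41 d12).elim
  | exact (one_edge_absurd G D hT hcomp u₃ u₄ u₁ u₂ h13.symm h24.symm h34 h41 h12 h23
      d34 d41 d12 d23).elim
  | exact (one_edge_absurd G D hT hcomp u₄ u₁ u₂ u₃ h24.symm h13 h41 h12 h23 h34
      d41 d12 d23 d34).elim
end

section
/- Let G be a triangle-free graph of maximum degree at most 3 with vertex weights a*, d*: V(G) → {0,1}, containing a 4-cycle C = v₁v₂v₃v₄v₁ where every vᵢ has degree 3, with wᵢ the neighbour of vᵢ off C, and all eight vertices distinct. Suppose D is a matching of deletable edges of G such that every component of G − D is P₁, P₂, P₃, or C₄ with the addability conditions making G a YES-instance of (1,1)-Cluster Editing. Then exactly one of the following holds: (i) vᵢwᵢ ∈ D for all i and no edge of C is in D; (ii) v₁v₂, v₃v₄ ∈ D and no edge vᵢwᵢ is in D and v₂v₃, v₄v₁ ∉ D; (iii) v₂v₃, v₄v₁ ∈ D and no edge vᵢwᵢ is in D and v₁v₂, v₃v₄ ∉ D. -/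
open SimpleGraph

variable {V : Type*}

/-- Option (i): all pendant edges `vᵢwᵢ` are deleted and no cycle edge is. -/
def OptI (D : SimpleGraph V) (v₁ v₂ v₃ v₄ w₁ w₂ w₃ w₄ : V) : Prop :=
  D.Adj v₁ w₁ ∧ D.Adj v₂ w₂ ∧ D.Adj v₃ w₃ ∧ D.Adj v₄ w₄ ∧
  ¬ D.Adj v₁ v₂ ∧ ¬ D.Adj v₂ v₃ ∧ ¬ D.Adj v₃ v₄ ∧ ¬ D.Adj v₄ v₁

/-- Option (ii): no pendant edge is deleted, `v₁v₂, v₃v₄ ∈ D`, `v₂v₃, v₄v₁ ∉ D`. -/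
def OptII (D : SimpleGraph V) (v₁ v₂ v₃ v₄ w₁ w₂ w₃ w₄ : V) : Prop :=
  ¬ D.Adj v₁ w₁ ∧ ¬ D.Adj v₂ w₂ ∧ ¬ D.Adj v₃ w₃ ∧ ¬ D.Adj v₄ w₄ ∧
  D.Adj v₁ v₂ ∧ D.Adj v₃ v₄ ∧ ¬ D.Adj v₂ v₃ ∧ ¬ D.Adj v₄ v₁

/-- Option (iii): no pendant edge is deleted, `v₂v₃, v₄v₁ ∈ D`, `v₁v₂, v₃v₄ ∉ D`. -/
def OptIII (D : SimpleGraph V) (v₁ v₂ v₃ v₄ w₁ w₂ w₃ w₄ : V) : Prop :=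
  ¬ D.Adj v₁ w₁ ∧ ¬ D.Adj v₂ w₂ ∧ ¬ D.Adj v₃ w₃ ∧ ¬ D.Adj v₄ w₄ ∧
  D.Adj v₂ v₃ ∧ D.Adj v₄ v₁ ∧ ¬ D.Adj v₁ v₂ ∧ ¬ D.Adj v₃ v₄


section Aux
variable {V : Type*}

lemma mem_supp_of_adj' {H : SimpleGraph V} {a b : V} (h : H.Adj a b) :
    b ∈ (H.connectedComponentMk a).supp := by
  rw [SimpleGraph.ConnectedComponent.mem_supp_iff]
  exact SimpleGraph.ConnectedComponent.sound h.symm.reachable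

lemma deg_le_two' {H : SimpleGraph V} (hG : GoodComponents H) {v x y z : V}
    (hvx : H.Adj v x) (hvy : H.Adj v y) (hvz : H.Adj v z)
    (hxy : x ≠ y) (hxz : x ≠ z) (hyz : y ≠ z) : False := by
  have hx := mem_supp_of_adj' hvx
  have hy := mem_supp_of_adj' hvy
  have hz := mem_supp_of_adj' hvz
  have hv : v ∈ (H.connectedComponentMk v).supp := by
    rw [SimpleGraph.ConnectedComponent.mem_supp_iff]
  rcases hG (H.connectedComponentMk v) with ⟨v₀, hs⟩ | ⟨u, u', hadj, hs⟩ |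
      ⟨u, m, w, hum, hmw, huw, hnuw, hs⟩ | ⟨p, q, r, s, hpq, hqr, hrs, hsp, hpr, hqs, hnpr, hnqs, hs⟩ <;>
    rw [hs] at hx hy hz hv <;>
    simp only [Set.mem_insert_iff, Set.mem_singleton_iff] at hx hy hz hv
  · subst hx; subst hy; exact hxy rfl
  · rcases hx with rfl | rfl <;> rcases hy with rfl | rfl <;> rcases hz with rfl | rfl <;> simp_all
  · rcases hv with rfl | rfl | rfl
    · have key : ∀ t, H.Adj v t → (t = v ∨ t = m ∨ t = w) → t = m := by
        rintro t hadj' (rfl | rfl | rfl)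
        · exact absurd hadj' (H.irrefl)
        · rfl
        · exact absurd hadj' hnuw
      rw [key x hvx hx, key y hvy hy] at hxy; exact hxy rfl
    · have key : ∀ t, H.Adj v t → (t = u ∨ t = v ∨ t = w) → t = u ∨ t = w := by
        rintro t hadj' (rfl | rfl | rfl)
        · exact Or.inl rfl
        · exact absurd hadj' (H.irrefl)
        · exact Or.inr rfl
      rcases key x hvx hx with rfl | rfl <;> rcases key y hvy hy with rfl | rfl <;>
        rcases key z hvz hz with rfl | rfl <;> simp_all
    · have key : ∀ t, H.Adj v t → (t = u ∨ t = m ∨ t = v) → t = m := by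
        rintro t hadj' (rfl | rfl | rfl)
        · exact absurd hadj'.symm hnuw
        · rfl
        · exact absurd hadj' (H.irrefl)
      rw [key x hvx hx, key y hvy hy] at hxy; exact hxy rfl
  · rcases hv with rfl | rfl | rfl | rfl
    · have key : ∀ t, H.Adj v t → (t = v ∨ t = q ∨ t = r ∨ t = s) → t = q ∨ t = s := by
        rintro t hadj' (rfl | rfl | rfl | rfl)
        · exact absurd hadj' (H.irrefl)
        · exact Or.inl rfl
        · exact absurd hadj' hnpr
        · exact Or.inr rfl
      rcases key x hvx hx with rfl | rfl <;> rcases key y hvy hy with rfl | rfl <;>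
        rcases key z hvz hz with rfl | rfl <;> simp_all
    · have key : ∀ t, H.Adj v t → (t = p ∨ t = v ∨ t = r ∨ t = s) → t = p ∨ t = r := by
        rintro t hadj' (rfl | rfl | rfl | rfl)
        · exact Or.inl rfl
        · exact absurd hadj' (H.irrefl)
        · exact Or.inr rfl
        · exact absurd hadj' hnqs
      rcases key x hvx hx with rfl | rfl <;> rcases key y hvy hy with rfl | rfl <;>
        rcases key z hvz hz with rfl | rfl <;> simp_all
    · have key : ∀ t, H.Adj v t → (t = p ∨ t = q ∨ t = v ∨ t = s) → t = q ∨ t = s := by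
        rintro t hadj' (rfl | rfl | rfl | rfl)
        · exact absurd hadj'.symm hnpr
        · exact Or.inl rfl
        · exact absurd hadj' (H.irrefl)
        · exact Or.inr rfl
      rcases key x hvx hx with rfl | rfl <;> rcases key y hvy hy with rfl | rfl <;>
        rcases key z hvz hz with rfl | rfl <;> simp_all
    · have key : ∀ t, H.Adj v t → (t = p ∨ t = q ∨ t = r ∨ t = v) → t = p ∨ t = r := by
        rintro t hadj' (rfl | rfl | rfl | rfl)
        · exact Or.inl rfl
        · exact absurd hadj'.symm hnqs
        · exact Or.inr rfl
        · exact absurd hadj' (H.irrefl)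
      rcases key x hvx hx with rfl | rfl <;> rcases key y hvy hy with rfl | rfl <;>
        rcases key z hvz hz with rfl | rfl <;> simp_all

lemma supp_small' {H : SimpleGraph V} (hG : GoodComponents H) (c : H.ConnectedComponent) :
    c.supp.ncard ≤ 4 := by
  rcases hG c with ⟨v₀, hs⟩ | ⟨u, u', _, hs⟩ | ⟨u, m, w, _, _, _, _, hs⟩ |
      ⟨p, q, r, s, _, _, _, _, _, _, _, _, hs⟩ <;> rw [hs]
  · simp [Set.ncard_singleton]
  · calc ({u, u'} : Set V).ncard ≤ ({u'} : Set V).ncard + 1 := Set.ncard_insert_le _ _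
      _ ≤ 4 := by simp [Set.ncard_singleton]
  · calc ({u, m, w} : Set V).ncard ≤ ({m, w} : Set V).ncard + 1 := Set.ncard_insert_le _ _
      _ ≤ (({w} : Set V).ncard + 1) + 1 := Nat.add_le_add_right (Set.ncard_insert_le _ _) 1
      _ ≤ 4 := by simp [Set.ncard_singleton]
  · calc ({p, q, r, s} : Set V).ncard ≤ ({q, r, s} : Set V).ncard + 1 := Set.ncard_insert_le _ _
      _ ≤ (({r, s} : Set V).ncard + 1) + 1 := Nat.add_le_add_right (Set.ncard_insert_le _ _) 1
      _ ≤ ((({s} : Set V).ncard + 1) + 1) + 1 :=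
          Nat.add_le_add_right (Nat.add_le_add_right (Set.ncard_insert_le _ _) 1) 1
      _ ≤ 4 := by simp [Set.ncard_singleton]

lemma no_five_path' [Fintype V] {H : SimpleGraph V} (hG : GoodComponents H) {a b c d e : V}
    (hab : H.Adj a b) (hbc : H.Adj b c) (hcd : H.Adj c d) (hde : H.Adj d e)
    (h1 : a ≠ b) (h2 : a ≠ c) (h3 : a ≠ d) (h4 : a ≠ e) (h5 : b ≠ c) (h6 : b ≠ d)
    (h7 : b ≠ e) (h8 : c ≠ d) (h9 : c ≠ e) (h10 : d ≠ e) : False := by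
  classical
  set c₀ := H.connectedComponentMk a with hc₀
  have ha : a ∈ c₀.supp := by rw [SimpleGraph.ConnectedComponent.mem_supp_iff]
  have hb : b ∈ c₀.supp := mem_supp_of_adj' hab
  have hc : c ∈ c₀.supp := by
    rw [SimpleGraph.ConnectedComponent.mem_supp_iff]
    exact (SimpleGraph.ConnectedComponent.sound hbc.symm.reachable).trans
      (SimpleGraph.ConnectedComponent.sound hab.symm.reachable)
  have hd : d ∈ c₀.supp := by
    rw [SimpleGraph.ConnectedComponent.mem_supp_iff]
    exact (SimpleGraph.ConnectedComponent.sound hcd.symm.reachable).trans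
      ((SimpleGraph.ConnectedComponent.sound hbc.symm.reachable).trans
        (SimpleGraph.ConnectedComponent.sound hab.symm.reachable))
  have he : e ∈ c₀.supp := by
    rw [SimpleGraph.ConnectedComponent.mem_supp_iff]
    exact (SimpleGraph.ConnectedComponent.sound hde.symm.reachable).trans
      ((SimpleGraph.ConnectedComponent.sound hcd.symm.reachable).trans
        ((SimpleGraph.ConnectedComponent.sound hbc.symm.reachable).trans
          (SimpleGraph.ConnectedComponent.sound hab.symm.reachable)))
  have hsub : ({a, b, c, d, e} : Set V) ⊆ c₀.supp := by
    intro t ht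
    simp only [Set.mem_insert_iff, Set.mem_singleton_iff] at ht
    rcases ht with rfl | rfl | rfl | rfl | rfl <;> assumption
  have hcard : ({a, b, c, d, e} : Set V).ncard = 5 := by
    rw [Set.ncard_insert_of_notMem (by simp [h1, h2, h3, h4]) (Set.toFinite _),
      Set.ncard_insert_of_notMem (by simp [h5, h6, h7]) (Set.toFinite _),
      Set.ncard_insert_of_notMem (by simp [h8, h9]) (Set.toFinite _),
      Set.ncard_insert_of_notMem (by simp [h10]) (Set.toFinite _),
      Set.ncard_singleton]
  have hle := Set.ncard_le_ncard hsub (Set.toFinite _)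
  have hss := supp_small' hG c₀
  omega

end Aux

/-- exactly one of options (i), (ii), (iii) holds for the
deleted matching of a solution around a 4-cycle of degree-3 vertices. -/
theorem stmt_10 {V : Type*} [Fintype V] [DecidableEq V] (G D : SimpleGraph V)
    (a d : V → ℕ) (ha : ∀ v, a v ≤ 1) (hd : ∀ v, d v ≤ 1)
    (hT : TriangleFree G) (hdeg : MaxDegLE G 3)
    (v₁ v₂ v₃ v₄ w₁ w₂ w₃ w₄ : V)
    (h12 : G.Adj v₁ v₂) (h23 : G.Adj v₂ v₃) (h34 : G.Adj v₃ v₄)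
    (h41 : G.Adj v₄ v₁)
    (hd1 : ndeg G v₁ = 3) (hd2 : ndeg G v₂ = 3) (hd3 : ndeg G v₃ = 3)
    (hd4 : ndeg G v₄ = 3)
    (hw1 : G.Adj v₁ w₁ ∧ w₁ ∉ ({v₁, v₂, v₃, v₄} : Set V))
    (hw2 : G.Adj v₂ w₂ ∧ w₂ ∉ ({v₁, v₂, v₃, v₄} : Set V))
    (hw3 : G.Adj v₃ w₃ ∧ w₃ ∉ ({v₁, v₂, v₃, v₄} : Set V))
    (hw4 : G.Adj v₄ w₄ ∧ w₄ ∉ ({v₁, v₂, v₃, v₄} : Set V))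
    (hdist : List.Pairwise (· ≠ ·) [v₁, v₂, v₃, v₄, w₁, w₂, w₃, w₄])
    (hD : DelMatching G D d)
    (hcomp : ∀ c : (G \ D).ConnectedComponent,
      P1Comp (G \ D) c ∨ P2Comp (G \ D) c ∨
      (∃ u m w, P3Comp (G \ D) c u m w ∧ ¬ G.Adj u w ∧ a u = 1 ∧ a w = 1) ∨
      (∃ p q r s, C4Comp (G \ D) c p q r s ∧ ¬ G.Adj p r ∧ ¬ G.Adj q s ∧
        a p = 1 ∧ a q = 1 ∧ a r = 1 ∧ a s = 1)) :
    (OptI D v₁ v₂ v₃ v₄ w₁ w₂ w₃ w₄ ∧ ¬ OptII D v₁ v₂ v₃ v₄ w₁ w₂ w₃ w₄ ∧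
        ¬ OptIII D v₁ v₂ v₃ v₄ w₁ w₂ w₃ w₄) ∨
    (¬ OptI D v₁ v₂ v₃ v₄ w₁ w₂ w₃ w₄ ∧ OptII D v₁ v₂ v₃ v₄ w₁ w₂ w₃ w₄ ∧
        ¬ OptIII D v₁ v₂ v₃ v₄ w₁ w₂ w₃ w₄) ∨
    (¬ OptI D v₁ v₂ v₃ v₄ w₁ w₂ w₃ w₄ ∧ ¬ OptII D v₁ v₂ v₃ v₄ w₁ w₂ w₃ w₄ ∧
        OptIII D v₁ v₂ v₃ v₄ w₁ w₂ w₃ w₄) := by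
  obtain ⟨hDG, hM, hDd⟩ := hD
  simp [List.pairwise_cons] at hdist
  obtain ⟨⟨a1, a2, a3, a4, a5, a6, a7⟩, ⟨b1, b2, b3, b4, b5, b6⟩, ⟨c1, c2, c3, c4, c5⟩,
    ⟨d1, d2, d3, d4⟩, ⟨e1, e2, e3⟩, ⟨f1, f2⟩, g1⟩ := hdist
  have hGC : GoodComponents (G \ D) := by
    intro c
    rcases hcomp c with h | h | ⟨u, m, w, h, -, -, -⟩ | ⟨p, q, r, s, h, -, -, -, -, -, -⟩
    · exact Or.inl h
    · exact Or.inr (Or.inl h)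
    · exact Or.inr (Or.inr (Or.inl ⟨u, m, w, h⟩))
    · exact Or.inr (Or.inr (Or.inr ⟨p, q, r, s, h⟩))
  have hone1 : D.Adj v₁ v₂ ∨ D.Adj v₁ v₄ ∨ D.Adj v₁ w₁ := by
    by_contra hcon
    push_neg at hcon
    exact deg_le_two' hGC ((sdiff_adj ..).mpr ⟨h12, hcon.1⟩) ((sdiff_adj ..).mpr ⟨h41.symm, hcon.2.1⟩)
      ((sdiff_adj ..).mpr ⟨hw1.1, hcon.2.2⟩) b2 b3 d1
  have hone2 : D.Adj v₂ v₁ ∨ D.Adj v₂ v₃ ∨ D.Adj v₂ w₂ := by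
    by_contra hcon
    push_neg at hcon
    exact deg_le_two' hGC ((sdiff_adj ..).mpr ⟨h12.symm, hcon.1⟩) ((sdiff_adj ..).mpr ⟨h23, hcon.2.1⟩)
      ((sdiff_adj ..).mpr ⟨hw2.1, hcon.2.2⟩) a2 a5 c3
  have hone3 : D.Adj v₃ v₂ ∨ D.Adj v₃ v₄ ∨ D.Adj v₃ w₃ := by
    by_contra hcon
    push_neg at hcon
    exact deg_le_two' hGC ((sdiff_adj ..).mpr ⟨h23.symm, hcon.1⟩) ((sdiff_adj ..).mpr ⟨h34, hcon.2.1⟩)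
      ((sdiff_adj ..).mpr ⟨hw3.1, hcon.2.2⟩) b2 b5 d3
  have hone4 : D.Adj v₄ v₃ ∨ D.Adj v₄ v₁ ∨ D.Adj v₄ w₄ := by
    by_contra hcon
    push_neg at hcon
    exact deg_le_two' hGC ((sdiff_adj ..).mpr ⟨h34.symm, hcon.1⟩) ((sdiff_adj ..).mpr ⟨h41, hcon.2.1⟩)
      ((sdiff_adj ..).mpr ⟨hw4.1, hcon.2.2⟩) (Ne.symm a2) c5 a7
  by_cases hE12 : D.Adj v₁ v₂
  · have hne23 : ¬ D.Adj v₂ v₃ := fun h => a2 (hM hE12.symm h)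
    have hne41 : ¬ D.Adj v₄ v₁ := fun h => b2 (hM hE12 h.symm)
    have hnp1 : ¬ D.Adj v₁ w₁ := fun h => b3 (hM hE12 h)
    have hnp2 : ¬ D.Adj v₂ w₂ := fun h => a5 (hM hE12.symm h)
    by_cases hE34 : D.Adj v₃ v₄
    · have hnp3 : ¬ D.Adj v₃ w₃ := fun h => d3 (hM hE34 h)
      have hnp4 : ¬ D.Adj v₄ w₄ := fun h => c5 (hM hE34.symm h)
      exact Or.inr (Or.inl ⟨fun h => h.2.2.2.2.1 hE12,
        ⟨hnp1, hnp2, hnp3, hnp4, hE12, hE34, hne23, hne41⟩,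
        fun h => hne23 h.2.2.2.2.1⟩)
    · exact absurd (no_five_path' hGC ((sdiff_adj ..).mpr ⟨hw1.1.symm, fun h => hnp1 h.symm⟩)
        ((sdiff_adj ..).mpr ⟨h41.symm, fun h => hne41 h.symm⟩)
        ((sdiff_adj ..).mpr ⟨h34.symm, fun h => hE34 h.symm⟩)
        ((sdiff_adj ..).mpr ⟨h23.symm, fun h => hne23 h.symm⟩)
        (Ne.symm a4) (Ne.symm d1) (Ne.symm c2) (Ne.symm b3) a3 a2 a1 (Ne.symm c1) (Ne.symm b2) (Ne.symm b1)) id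
  · by_cases hE41 : D.Adj v₄ v₁
    · have hne34 : ¬ D.Adj v₃ v₄ := fun h => a2 (hM h.symm hE41).symm
      have hnp4 : ¬ D.Adj v₄ w₄ := fun h => a7 (hM hE41 h)
      have hnp1 : ¬ D.Adj v₁ w₁ := fun h => d1 (hM hE41.symm h)
      by_cases hE23 : D.Adj v₂ v₃
      · have hnp2 : ¬ D.Adj v₂ w₂ := fun h => c3 (hM hE23 h)
        have hnp3 : ¬ D.Adj v₃ w₃ := fun h => b5 (hM hE23.symm h)
        exact Or.inr (Or.inr ⟨fun h => h.2.2.2.2.2.1 hE23, fun h => hE12 h.2.2.2.2.1,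
          hnp1, hnp2, hnp3, hnp4, hE23, hE41, hE12, hne34⟩)
      · exact absurd (no_five_path' hGC ((sdiff_adj ..).mpr ⟨hw1.1.symm, fun h => hnp1 h.symm⟩)
          ((sdiff_adj ..).mpr ⟨h12, hE12⟩) ((sdiff_adj ..).mpr ⟨h23, hE23⟩)
          ((sdiff_adj ..).mpr ⟨h34, hne34⟩)
          (Ne.symm a4) (Ne.symm b3) (Ne.symm c2) (Ne.symm d1) a1 a2 a3 b1 b2 c1) id
    · by_cases hE23 : D.Adj v₂ v₃
      · have hne34 : ¬ D.Adj v₃ v₄ := fun h => b2 (hM hE23.symm h)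
        have hnp2 : ¬ D.Adj v₂ w₂ := fun h => c3 (hM hE23 h)
        exact absurd (no_five_path' hGC ((sdiff_adj ..).mpr ⟨hw2.1.symm, fun h => hnp2 h.symm⟩)
          ((sdiff_adj ..).mpr ⟨h12.symm, fun h => hE12 h.symm⟩)
          ((sdiff_adj ..).mpr ⟨h41.symm, fun h => hE41 h.symm⟩)
          ((sdiff_adj ..).mpr ⟨h34.symm, fun h => hne34 h.symm⟩)
          (Ne.symm b4) (Ne.symm a5) (Ne.symm d2) (Ne.symm c3) (Ne.symm a1) b2 b1 a3 a2 (Ne.symm c1)) id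
      · by_cases hE34 : D.Adj v₃ v₄
        · have hnp3 : ¬ D.Adj v₃ w₃ := fun h => d3 (hM hE34 h)
          exact absurd (no_five_path' hGC ((sdiff_adj ..).mpr ⟨hw3.1.symm, fun h => hnp3 h.symm⟩)
            ((sdiff_adj ..).mpr ⟨h23.symm, fun h => hE23 h.symm⟩)
            ((sdiff_adj ..).mpr ⟨h12.symm, fun h => hE12 h.symm⟩)
            ((sdiff_adj ..).mpr ⟨h41.symm, fun h => hE41 h.symm⟩)
            (Ne.symm c4) (Ne.symm b5) (Ne.symm a6) (Ne.symm d3) (Ne.symm b1) (Ne.symm a2) c1 (Ne.symm a1) b2 a3) id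
        · have hp1 : D.Adj v₁ w₁ := by
            rcases hone1 with h | h | h
            · exact absurd h hE12
            · exact absurd h.symm hE41
            · exact h
          have hp2 : D.Adj v₂ w₂ := by
            rcases hone2 with h | h | h
            · exact absurd h.symm hE12
            · exact absurd h hE23
            · exact h
          have hp3 : D.Adj v₃ w₃ := by
            rcases hone3 with h | h | h
            · exact absurd h.symm hE23
            · exact absurd h hE34
            · exact h
          have hp4 : D.Adj v₄ w₄ := by
            rcases hone4 with h | h | h
            · exact absurd h.symm hE34
            · exact absurd h hE41
            · exact h
          exact Or.inl ⟨⟨hp1, hp2, hp3, hp4, hE12, hE23, hE34, hE41⟩,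
            fun h => hE12 h.2.2.2.2.1, fun h => hE23 h.2.2.2.2.1⟩
end

section
/- Let G be a {C₃,C₄}-free graph of maximum degree at most 3, with vertex weights a*, d*: V(G) → {0,1}, such that: every vertex of degree at least 2 has d*-value 1; no vertex of degree 3 is adjacent to a vertex with a*-value 0; and the degree-3 vertices form an independent set. Let X₃ be the set of degree-3 vertices, X₂' the set of degree-2 vertices with a neighbour in X₃, X₂'' the remaining degree-2 vertices, Z the set of vertices of X₂'' having a neighbour w with a*(w)=0, and Y = Z ∪ X₂' ∪ X₃. Then (G, a*, d*) is a YES-instance of (1,1)-Cluster Editing if and only if G has a matching covering every vertex of Y and covering no vertex w with d*(w)=0. -/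
open SimpleGraph

variable {V : Type*}

/-- Degree-3 vertices. -/
noncomputable def X3 (G : SimpleGraph V) : Set V := {v | ndeg G v = 3}

/-- Degree-2 vertices with a degree-3 neighbour. -/
noncomputable def X2p (G : SimpleGraph V) : Set V :=
  {v | ndeg G v = 2 ∧ ∃ w, G.Adj v w ∧ ndeg G w = 3}

/-- Degree-2 vertices with no degree-3 neighbour. -/
noncomputable def X2pp (G : SimpleGraph V) : Set V :=
  {v | ndeg G v = 2 ∧ ∀ w, G.Adj v w → ndeg G w ≠ 3}

/-- Vertices of `X2''` with a neighbour of `a`-value 0. -/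
noncomputable def Zset (G : SimpleGraph V) (a : V → ℕ) : Set V :=
  {v | v ∈ X2pp G ∧ ∃ w, G.Adj v w ∧ a w = 0}

/-- `Y = Z ∪ X₂' ∪ X₃`. -/
noncomputable def Yset (G : SimpleGraph V) (a : V → ℕ) : Set V :=
  Zset G a ∪ X2p G ∪ X3 G

/-
A solution `(D, A)` must delete an edge at every vertex of `Y`: otherwise two kept edges
`y u`, `y w` force the non-edge `u w` into `A` (by triangle-freeness), and for `y ∈ X₃` this
puts two `A`-edges at one vertex, for `y ∈ Z` it adds an edge at a vertex of `a`-value `0`,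
and for `y ∈ X₂'` it produces a `C₄`. So `D` itself is the required matching.

Conversely, given the matching `M`, every vertex has degree at most `2` in `G \ M`. A vertex
with two neighbours in `G \ M` either has degree `3` or is unmatched and outside `Y`; either
way its neighbours have `a`-value `1`. Among the subgraphs `P ≤ G \ M` such that `(G \ M) \ P`
is a matching on unmatched vertices of `d`-value `1`, take a minimal one: a trail `a b c d` in
`P` meets no edge of `(G \ M) \ P` at `b` or `c`, so `b c` could be removed from `P` as well.
Hence the components of `P` are paths on at most three vertices, and deleting `G \ P` while
closing every `P₃` of `P` into a triangle solves the instance.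
-/

section Degree

variable {G H : SimpleGraph V} {v : V}

lemma exists_adj_notMem {s : Finset V} (hs : s.card < ndeg G v) : ∃ w, G.Adj v w ∧ w ∉ s := by
  by_contra! h
  have : ndeg G v ≤ s.card := by
    rw [← Set.ncard_coe_finset]
    exact Set.ncard_le_ncard h s.finite_toSet
  omega

variable [Finite V]

lemma card_le_ndeg {s : Finset V} (hs : ∀ w ∈ s, G.Adj v w) : s.card ≤ ndeg G v := by
  rw [← Set.ncard_coe_finset]
  exact Set.ncard_le_ncard hs (Set.toFinite _)

lemma two_le_ndeg {x y : V} (hx : G.Adj v x) (hy : G.Adj v y) (hxy : x ≠ y) : 2 ≤ ndeg G v := by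
  classical
  simpa [Finset.card_pair hxy] using card_le_ndeg (s := {x, y}) (by simp [hx, hy])

lemma three_le_ndeg {x y z : V} (hx : G.Adj v x) (hy : G.Adj v y) (hz : G.Adj v z)
    (hxy : x ≠ y) (hxz : x ≠ z) (hyz : y ≠ z) : 3 ≤ ndeg G v := by
  classical
  have hcard : ({x, y, z} : Finset V).card = 3 :=
    Finset.card_eq_three.mpr ⟨x, y, z, hxy, hxz, hyz, rfl⟩
  simpa [hcard] using card_le_ndeg (s := {x, y, z}) (by simp [hx, hy, hz])

lemma ndeg_le_of_le (h : G ≤ H) : ndeg G v ≤ ndeg H v :=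
  Set.ncard_le_ncard (fun _ hw => h hw) (Set.toFinite _)

lemma MaxDegLE.anti {n : ℕ} (hH : MaxDegLE H n) (h : G ≤ H) : MaxDegLE G n :=
  fun v => (ndeg_le_of_le h).trans (hH v)

lemma MaxDegLE.eq_or_eq {x y z : V} (hG : MaxDegLE G 2) (hx : G.Adj v x) (hy : G.Adj v y)
    (hz : G.Adj v z) (hxy : x ≠ y) : z = x ∨ z = y := by
  by_contra! h
  have := three_le_ndeg hx hy hz hxy (Ne.symm h.1) (Ne.symm h.2)
  have := hG v
  omega

end Degree

section Matching

variable {M N : SimpleGraph V}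

lemma IsMatchingGraph.anti (hN : IsMatchingGraph N) (h : M ≤ N) : IsMatchingGraph M :=
  fun _ _ _ h₁ h₂ => hN (h h₁) (h h₂)

lemma IsMatchingGraph.sup (hM : IsMatchingGraph M) (hN : IsMatchingGraph N)
    (hdisj : ∀ ⦃u v w⦄, N.Adj u v → ¬ M.Adj u w) : IsMatchingGraph (M ⊔ N) := by
  rintro u v w (h₁ | h₁) (h₂ | h₂)
  · exact hM h₁ h₂
  · exact absurd h₁ (hdisj h₂)
  · exact absurd h₂ (hdisj h₁)
  · exact hN h₁ h₂

lemma isMatchingGraph_edge (b c : V) : IsMatchingGraph (edge b c) := by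
  intro u v w h₁ h₂
  rw [edge_adj] at h₁ h₂
  grind

end Matching

section Closure

/-- `a = d` is allowed, so triangles are excluded as well. -/
def NoTrailOfLengthThree (P : SimpleGraph V) : Prop :=
  ∀ ⦃a b c d : V⦄, P.Adj a b → P.Adj b c → P.Adj c d → a ≠ c → b ≠ d → False

def commonNeighborGraph (P : SimpleGraph V) : SimpleGraph V where
  Adj x y := x ≠ y ∧ ∃ m, P.Adj x m ∧ P.Adj m y
  symm := ⟨fun _ _ ⟨hne, m, hxm, hmy⟩ => ⟨hne.symm, m, hmy.symm, hxm.symm⟩⟩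
  loopless := ⟨fun _ h => h.1 rfl⟩

variable [Finite V] {P : SimpleGraph V}

lemma NoTrailOfLengthThree.isMatchingGraph_commonNeighborGraph (hP : NoTrailOfLengthThree P)
    (hdeg : MaxDegLE P 2) : IsMatchingGraph (commonNeighborGraph P) := by
  rintro x y y' ⟨hxy, m, hxm, hmy⟩ ⟨hxy', m', hxm', hmy'⟩
  by_cases hm : m = m'
  · subst hm
    exact ((hdeg.eq_or_eq hxm.symm hmy hmy' hxy).resolve_left (Ne.symm hxy')).symm
  · exact (hP hmy.symm hxm.symm hxm' hxy.symm hm).elim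

lemma NoTrailOfLengthThree.isClusterGraph_sup_commonNeighborGraph (hP : NoTrailOfLengthThree P)
    (hdeg : MaxDegLE P 2) : IsClusterGraph (P ⊔ commonNeighborGraph P) := by
  rintro u v w (huv | ⟨huv, m, hum, hmv⟩) (hvw | ⟨hvw, m', hvm', hm'w⟩) huw
  · exact Or.inr ⟨huw, v, huv, hvw⟩
  · by_cases hu : u = m'
    · exact Or.inl (hu ▸ hm'w)
    · exact (hP huv hvm' hm'w hu hvw).elim
  · by_cases hw : m = w
    · exact Or.inl (hw ▸ hum)
    · exact (hP hum hmv hvw huv hw).elim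
  · by_cases hm : m = m'
    · subst hm
      exact ((hdeg.eq_or_eq hmv hum.symm hm'w (Ne.symm huv)).elim (fun h => hvw h.symm)
        (fun h => huw h.symm)).elim
    · exact (hP hum hmv hvm' huv hm).elim

end Closure

section Solution

variable [Finite V] {G P : SimpleGraph V} {a d : V → ℕ}

lemma NoTrailOfLengthThree.hasSolution (hP : NoTrailOfLengthThree P) (hT : TriangleFree G)
    (hPG : P ≤ G) (hdeg : MaxDegLE P 2) (hD : IsMatchingGraph (G \ P))
    (hDd : ∀ ⦃u v⦄, (G \ P).Adj u v → d u = 1)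
    (hAa : ∀ ⦃x m y⦄, P.Adj x m → P.Adj m y → x ≠ y → a x = 1) : HasSolution G a d := by
  refine ⟨G \ P, commonNeighborGraph P, ⟨sdiff_le, hD, fun u v h => ⟨hDd h, hDd h.symm⟩⟩,
    ⟨?_, hP.isMatchingGraph_commonNeighborGraph hdeg, ?_⟩, ?_⟩
  · rintro x y ⟨hxy, m, hxm, hmy⟩
    exact (compl_adj G x y).mpr ⟨hxy, fun h => hT (hPG hxm) (hPG hmy) h⟩
  · rintro x y ⟨hxy, m, hxm, hmy⟩
    exact ⟨hAa hxm hmy hxy, hAa hmy.symm hxm.symm hxy.symm⟩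
  · rw [sdiff_sdiff_right_self, inf_of_le_right hPG]
    exact hP.isClusterGraph_sup_commonNeighborGraph hdeg

end Solution

section Chop

variable [Finite V] {H P : SimpleGraph V}

lemma not_adj_sdiff_of_adj_of_adj (hH : MaxDegLE H 2) (hPH : P ≤ H) {v x y : V}
    (hx : P.Adj v x) (hy : P.Adj v y) (hxy : x ≠ y) : ∀ ⦃z⦄, ¬ (H \ P).Adj v z := by
  rintro z ⟨hz, hPz⟩
  rcases hH.eq_or_eq (hPH hx) (hPH hy) hz hxy with rfl | rfl <;> contradiction

theorem exists_le_noTrailOfLengthThree (hH : MaxDegLE H 2) (free : V → Prop)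
    (hfree : ∀ ⦃v x y z⦄, H.Adj v x → H.Adj v y → x ≠ y → H.Adj y z → z ≠ v → free v) :
    ∃ P ≤ H, NoTrailOfLengthThree P ∧ IsMatchingGraph (H \ P) ∧
      ∀ ⦃u v⦄, (H \ P).Adj u v → free u := by
  obtain ⟨P, hPH, ⟨-, hmatch, hcut⟩, hmin⟩ := exists_minimal_le_of_wellFoundedLT
    (fun P => P ≤ H ∧ IsMatchingGraph (H \ P) ∧ ∀ ⦃u v⦄, (H \ P).Adj u v → free u) H
    ⟨le_rfl, fun _ _ _ h => by simp at h, by simp⟩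
  refine ⟨P, hPH, fun a b c d hab hbc hcd hac hbd => ?_, hmatch, hcut⟩
  have hb := not_adj_sdiff_of_adj_of_adj hH hPH hab.symm hbc hac
  have hc := not_adj_sdiff_of_adj_of_adj hH hPH hcd hbc.symm (Ne.symm hbd)
  have hle : H \ P.deleteEdges {s(b, c)} ≤ edge b c ⊔ (H \ P) := by
    rintro u v ⟨huv, hP'⟩
    by_cases h : P.Adj u v
    · have hedge : u = b ∧ v = c ∨ u = c ∧ v = b := by
        simpa only [deleteEdges_adj, h, true_and, Set.mem_singleton_iff, not_not, Sym2.eq_iff]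
          using hP'
      exact Or.inl ((edge_adj b c u v).mpr ⟨hedge, huv.ne⟩)
    · exact Or.inr ⟨huv, h⟩
  have hdisj : ∀ ⦃u v w⦄, (H \ P).Adj u v → ¬ (edge b c).Adj u w := by
    intro u v w huv hedge
    rcases ((edge_adj b c u w).mp hedge).1 with ⟨rfl, -⟩ | ⟨rfl, -⟩
    exacts [hb huv, hc huv]
  have hfree' : ∀ ⦃u v⦄, (H \ P.deleteEdges {s(b, c)}).Adj u v → free u := by
    intro u v huv
    rcases hle huv with hedge | huv
    · rcases ((edge_adj b c u v).mp hedge).1 with ⟨rfl, -⟩ | ⟨rfl, -⟩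
      exacts [hfree (hPH hab.symm) (hPH hbc) hac (hPH hcd) (Ne.symm hbd),
        hfree (hPH hcd) (hPH hbc.symm) (Ne.symm hbd) (hPH hab.symm) hac]
    · exact hcut huv
  have hP' := hmin ⟨(deleteEdges_le _).trans hPH,
      ((isMatchingGraph_edge b c).sup hmatch hdisj).anti hle, hfree'⟩ (deleteEdges_le _)
  simpa using hP' hbc

end Chop

section Forward

variable {G D A : SimpleGraph V} {a : V → ℕ} {y : V}

lemma addAdj_of_adj_of_adj (hT : TriangleFree G) (hcl : IsClusterGraph ((G \ D) ⊔ A)) {u w : V}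
    (hu : G.Adj y u) (hw : G.Adj y w) (huw : u ≠ w) (hDu : ¬ D.Adj y u) (hDw : ¬ D.Adj y w) :
    A.Adj u w := by
  rcases hcl (Or.inl ⟨hu.symm, fun h => hDu h.symm⟩) (Or.inl ⟨hw, hDw⟩) huw with h | h
  · exact (hT hu h.1 hw).elim
  · exact h

lemma exists_delAdj_of_mem_X3 (hT : TriangleFree G) (hcl : IsClusterGraph ((G \ D) ⊔ A))
    (hA : IsMatchingGraph A) (hy : y ∈ X3 G) : ∃ w, D.Adj y w := by
  classical
  have hy3 : ndeg G y = 3 := hy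
  by_contra! hD
  obtain ⟨c₁, h₁, -⟩ := exists_adj_notMem (G := G) (v := y) (s := ∅) (by simp [hy3])
  obtain ⟨c₂, h₂, h₂₁⟩ := exists_adj_notMem (G := G) (v := y) (s := {c₁}) (by simp [hy3])
  obtain ⟨c₃, h₃, h₃₁₂⟩ :=
    exists_adj_notMem (G := G) (v := y) (s := {c₁, c₂}) (Finset.card_le_two.trans_lt (by omega))
  simp only [Finset.mem_insert, Finset.mem_singleton, not_or] at h₂₁ h₃₁₂
  exact h₃₁₂.2 (hA (addAdj_of_adj_of_adj hT hcl h₁ h₃ (Ne.symm h₃₁₂.1) (hD _) (hD _))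
    (addAdj_of_adj_of_adj hT hcl h₁ h₂ (Ne.symm h₂₁) (hD _) (hD _)))

lemma exists_delAdj_of_mem_Zset (hT : TriangleFree G) (hcl : IsClusterGraph ((G \ D) ⊔ A))
    (hAa : ∀ ⦃u v⦄, A.Adj u v → a u = 1 ∧ a v = 1) (hy : y ∈ Zset G a) : ∃ w, D.Adj y w := by
  classical
  obtain ⟨⟨hy2, -⟩, w, hw, hw0⟩ := hy
  by_contra! hD
  obtain ⟨u, hu, huw⟩ := exists_adj_notMem (G := G) (v := y) (s := {w}) (by simp [hy2])
  have := (hAa (addAdj_of_adj_of_adj hT hcl hu hw (by simpa using huw) (hD _) (hD _))).2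
  omega

lemma exists_delAdj_of_mem_X2p (hT : TriangleFree G) (hC4 : C4Free G)
    (hcl : IsClusterGraph ((G \ D) ⊔ A)) (hD : IsMatchingGraph D) (hA : IsMatchingGraph A)
    (hy : y ∈ X2p G) : ∃ w, D.Adj y w := by
  classical
  obtain ⟨hy2, t, hyt, ht3⟩ := hy
  by_contra! hDy
  obtain ⟨u, hyu, hut⟩ := exists_adj_notMem (G := G) (v := y) (s := {t}) (by simp [hy2])
  obtain ⟨p, htp, hpy, hDtp⟩ : ∃ p, G.Adj t p ∧ p ≠ y ∧ ¬ D.Adj t p := by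
    obtain ⟨p, htp, hpy⟩ := exists_adj_notMem (G := G) (v := t) (s := {y}) (by simp [ht3])
    obtain ⟨q, htq, hqyp⟩ := exists_adj_notMem (G := G) (v := t) (s := {y, p})
      (Finset.card_le_two.trans_lt (by omega))
    simp only [Finset.mem_insert, Finset.mem_singleton, not_or] at hpy hqyp
    by_cases hDtp : D.Adj t p
    · exact ⟨q, htq, hqyp.1, fun hDtq => hqyp.2 (hD hDtp hDtq).symm⟩
    · exact ⟨p, htp, hpy, hDtp⟩
  simp only [Finset.mem_singleton] at hut
  have hup : u ≠ p := by
    rintro rfl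
    exact hT hyu htp.symm hyt
  have hAut := addAdj_of_adj_of_adj hT hcl hyu hyt hut (hDy _) (hDy _)
  have hKup : ((G \ D) ⊔ A).Adj u p := hcl (Or.inr hAut) (Or.inl ⟨htp, hDtp⟩) hup
  rcases hKup with ⟨hGup, -⟩ | hAup
  · exact hC4 (Ne.symm hpy) hut hyu hGup htp.symm hyt.symm
  · exact htp.ne (hA hAut hAup)

lemma HasSolution.exists_matching (hT : TriangleFree G) (hC4 : C4Free G) {d : V → ℕ}
    (h : HasSolution G a d) :
    ∃ M : SimpleGraph V, M ≤ G ∧ IsMatchingGraph M ∧ (∀ y ∈ Yset G a, ∃ w, M.Adj y w) ∧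
      (∀ w, d w = 0 → ∀ z, ¬ M.Adj w z) := by
  obtain ⟨D, A, ⟨hDG, hD, hDd⟩, ⟨-, hA, hAa⟩, hcl⟩ := h
  refine ⟨D, hDG, hD, ?_, fun w hw z hwz => by simp [(hDd hwz).1] at hw⟩
  rintro y ((hy | hy) | hy)
  · exact exists_delAdj_of_mem_Zset hT hcl hAa hy
  · exact exists_delAdj_of_mem_X2p hT hC4 hcl hD hA hy
  · exact exists_delAdj_of_mem_X3 hT hcl hA hy

end Forward

section Backward

variable {G M : SimpleGraph V} {a : V → ℕ} {v x y : V}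

lemma ne_zero_of_notMem_Yset (hv2 : ndeg G v = 2) (hvY : v ∉ Yset G a) (hx : G.Adj v x) :
    a x ≠ 0 :=
  fun hx0 => hvY (Or.inl (Or.inl
    ⟨⟨hv2, fun w hw hw3 => hvY (Or.inl (Or.inr ⟨hv2, w, hw, hw3⟩))⟩, x, hx, hx0⟩))

variable [Finite V]

lemma three_le_ndeg_of_adj_sdiff (hMG : M ≤ G) (hx : (G \ M).Adj v x) (hy : (G \ M).Adj v y)
    (hxy : x ≠ y) {z : V} (hz : M.Adj v z) : 3 ≤ ndeg G v :=
  three_le_ndeg hx.1 hy.1 (hMG hz) hxy (fun h => hx.2 (h ▸ hz)) (fun h => hy.2 (h ▸ hz))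

lemma maxDegLE_sdiff (hMG : M ≤ G) (hdeg : MaxDegLE G 3) (hX3 : ∀ y ∈ X3 G, ∃ w, M.Adj y w) :
    MaxDegLE (G \ M) 2 := by
  intro v
  by_cases hv : ∃ w, M.Adj v w
  · obtain ⟨w, hw⟩ := hv
    have hsub : {u | (G \ M).Adj v u} ⊆ {u | G.Adj v u} \ {w} :=
      fun u hu => ⟨hu.1, fun h => hu.2 ((Set.mem_singleton_iff.mp h) ▸ hw)⟩
    have := Set.ncard_le_ncard hsub (Set.toFinite _)
    have := Set.ncard_sdiff_singleton_add_one (s := {u | G.Adj v u}) (hMG hw)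
    have := hdeg v
    unfold ndeg at *
    omega
  · have hv3 : ndeg G v ≠ 3 := fun h => hv (hX3 v h)
    have := ndeg_le_of_le (v := v) (sdiff_le : G \ M ≤ G)
    have := hdeg v
    omega

lemma forall_not_adj_of_adj_sdiff (hMG : M ≤ G) (hdeg : MaxDegLE G 3)
    (h3 : ∀ v w, ndeg G v = 3 → ndeg G w = 3 → ¬ G.Adj v w) (hX2p : ∀ y ∈ X2p G, ∃ w, M.Adj y w)
    {z : V} (hx : (G \ M).Adj v x) (hy : (G \ M).Adj v y) (hxy : x ≠ y) (hz : (G \ M).Adj y z)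
    (hzv : z ≠ v) : ∀ w, ¬ M.Adj v w := by
  intro w hw
  have hv3 : ndeg G v = 3 := le_antisymm (hdeg v) (three_le_ndeg_of_adj_sdiff hMG hx hy hxy hw)
  have hy2 : ndeg G y = 2 := by
    have := two_le_ndeg hy.1.symm hz.1 (Ne.symm hzv)
    have := hdeg y
    have : ndeg G y ≠ 3 := fun h => h3 v y hv3 h hy.1
    omega
  obtain ⟨w', hw'⟩ := hX2p y ⟨hy2, v, hy.1.symm, hv3⟩
  have := three_le_ndeg_of_adj_sdiff hMG hy.symm hz (Ne.symm hzv) hw'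
  omega

lemma eq_one_of_adj_sdiff (ha : ∀ v, a v ≤ 1) (hMG : M ≤ G) (hdeg : MaxDegLE G 3)
    (h2 : ∀ v w, ndeg G v = 3 → G.Adj v w → a w ≠ 0) (hY : ∀ y ∈ Yset G a, ∃ w, M.Adj y w)
    (hx : (G \ M).Adj v x) (hy : (G \ M).Adj v y) (hxy : x ≠ y) : a x = 1 := by
  suffices a x ≠ 0 by have := ha x; omega
  by_cases hv3 : ndeg G v = 3
  · exact h2 v x hv3 hx.1
  have hv2 : ndeg G v = 2 := by
    have := two_le_ndeg hx.1 hy.1 hxy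
    have := hdeg v
    omega
  refine ne_zero_of_notMem_Yset hv2 (fun hvY => ?_) hx.1
  obtain ⟨w, hw⟩ := hY v hvY
  have := three_le_ndeg_of_adj_sdiff hMG hx hy hxy hw
  omega

lemma hasSolution_of_matching {d : V → ℕ} (ha : ∀ v, a v ≤ 1) (hd : ∀ v, d v ≤ 1)
    (hT : TriangleFree G) (hdeg : MaxDegLE G 3) (h1 : ∀ v, 2 ≤ ndeg G v → d v = 1)
    (h2 : ∀ v w, ndeg G v = 3 → G.Adj v w → a w ≠ 0)
    (h3 : ∀ v w, ndeg G v = 3 → ndeg G w = 3 → ¬ G.Adj v w) (hMG : M ≤ G)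
    (hM : IsMatchingGraph M) (hY : ∀ y ∈ Yset G a, ∃ w, M.Adj y w)
    (hMd : ∀ w, d w = 0 → ∀ z, ¬ M.Adj w z) : HasSolution G a d := by
  have hH := maxDegLE_sdiff hMG hdeg fun y hy => hY y (Or.inr hy)
  obtain ⟨P, hPH, hP, hcut, hfree⟩ := exists_le_noTrailOfLengthThree hH
    (fun v => (∀ w, ¬ M.Adj v w) ∧ d v = 1) fun v x y z hx hy hxy hz hzv =>
      ⟨forall_not_adj_of_adj_sdiff hMG hdeg h3 (fun y hy => hY y (Or.inl (Or.inr hy)))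
        hx hy hxy hz hzv, h1 v (two_le_ndeg hx.1 hy.1 hxy)⟩
  have hle : G \ P ≤ M ⊔ ((G \ M) \ P) := by
    rintro u v ⟨huv, hPuv⟩
    by_cases h : M.Adj u v
    · exact Or.inl h
    · exact Or.inr ⟨⟨huv, h⟩, hPuv⟩
  refine hP.hasSolution hT (hPH.trans sdiff_le) (hH.anti hPH)
    ((hM.sup hcut fun u v w huv => (hfree huv).1 w).anti hle) (fun u v huv => ?_)
    (fun x m y hxm hmy hxy => eq_one_of_adj_sdiff ha hMG hdeg h2 hY (hPH hxm.symm) (hPH hmy) hxy)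
  rcases hle huv with h | h
  · have := hd u
    have : d u ≠ 0 := fun h0 => hMd u h0 v h
    omega
  · exact (hfree h).2

end Backward

theorem stmt_11_general {V : Type*} [Fintype V] (G : SimpleGraph V)
    (a d : V → ℕ) (ha : ∀ v, a v ≤ 1) (hd : ∀ v, d v ≤ 1)
    (hT : TriangleFree G) (hC4 : C4Free G) (hdeg : MaxDegLE G 3)
    (h1 : ∀ v, 2 ≤ ndeg G v → d v = 1)
    (h2 : ∀ v w, ndeg G v = 3 → G.Adj v w → a w ≠ 0)
    (h3 : ∀ v w, ndeg G v = 3 → ndeg G w = 3 → ¬ G.Adj v w) :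
    HasSolution G a d ↔
      ∃ M : SimpleGraph V, M ≤ G ∧ IsMatchingGraph M ∧
        (∀ y ∈ Yset G a, ∃ w, M.Adj y w) ∧
        (∀ w, d w = 0 → ∀ z, ¬ M.Adj w z) :=
  ⟨fun h => h.exists_matching hT hC4, fun ⟨_, hMG, hM, hY, hMd⟩ =>
    hasSolution_of_matching ha hd hT hdeg h1 h2 h3 hMG hM hY hMd⟩

/-- for special {C₃,C₄}-free graphs of max degree ≤ 3,
being a YES-instance is equivalent to the existence of a matching covering `Y`
and avoiding all vertices of `d`-value 0. -/
theorem stmt_11 {V : Type*} [Fintype V] [DecidableEq V] (G : SimpleGraph V)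
    (a d : V → ℕ) (ha : ∀ v, a v ≤ 1) (hd : ∀ v, d v ≤ 1)
    (hT : TriangleFree G) (hC4 : C4Free G) (hdeg : MaxDegLE G 3)
    (h1 : ∀ v, 2 ≤ ndeg G v → d v = 1)
    (h2 : ∀ v w, ndeg G v = 3 → G.Adj v w → a w ≠ 0)
    (h3 : ∀ v w, ndeg G v = 3 → ndeg G w = 3 → ¬ G.Adj v w) :
    HasSolution G a d ↔
      ∃ M : SimpleGraph V, M ≤ G ∧ IsMatchingGraph M ∧
        (∀ y ∈ Yset G a, ∃ w, M.Adj y w) ∧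
        (∀ w, d w = 0 → ∀ z, ¬ M.Adj w z) :=
  stmt_11_general G a d ha hd hT hC4 hdeg h1 h2 h3
end

section
/- Let G be a {C₃,C₄}-free graph of maximum degree at most 3 satisfying the special conditions (every vertex of degree ≥ 2 has d*-value 1; no degree-3 vertex is adjacent to a vertex with a*-value 0; degree-3 vertices form an independent set), let Y = Z ∪ X₂' ∪ X₃ be as in the special reduction, and let D be a maximal matching of G among matchings covering all of Y and no vertex with d*-value 0. Then in G − D there is no edge uv with both u and v having degree 2 in G − D; consequently every connected component of G − D is isomorphic to P₁, P₂, or P₃. -/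
open SimpleGraph

variable {V : Type*}

private lemma aux_walk_mem {H : SimpleGraph V} {S : Set V}
    (hS : ∀ x ∈ S, ∀ y, H.Adj x y → y ∈ S) :
    ∀ {u v : V}, H.Walk u v → u ∈ S → v ∈ S := by
  intro u v p
  induction p with
  | nil => exact id
  | cons h _ ih => exact fun hu => ih (hS _ hu _ h)

private lemma aux_supp_eq {H : SimpleGraph V} {S : Set V} {u : V}
    (hu : u ∈ S) (hS : ∀ x ∈ S, ∀ y, H.Adj x y → y ∈ S)
    (hreach : ∀ s ∈ S, H.Reachable u s) :
    (H.connectedComponentMk u).supp = S := by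
  ext v
  simp only [SimpleGraph.ConnectedComponent.mem_supp_iff, SimpleGraph.ConnectedComponent.eq]
  constructor
  · intro h
    obtain ⟨p⟩ := h.symm
    exact aux_walk_mem hS p hu
  · exact fun hv => (hreach v hv).symm

private lemma aux_pair {α : Type*} {s : Set α} (h2 : s.ncard = 2) {x : α} (hx : x ∈ s) :
    ∃ y, y ≠ x ∧ s = {x, y} := by
  obtain ⟨a, b, hab, rfl⟩ := Set.ncard_eq_two.1 h2
  simp only [Set.mem_insert_iff, Set.mem_singleton_iff] at hx
  rcases hx with rfl | rfl
  · exact ⟨b, hab.symm, rfl⟩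
  · exact ⟨a, hab, Set.pair_comm a x⟩

private lemma aux_single {α : Type*} {s : Set α} (h1 : s.ncard = 1) {x : α} (hx : x ∈ s) :
    s = {x} := by
  obtain ⟨a, rfl⟩ := Set.ncard_eq_one.1 h1
  simp only [Set.mem_singleton_iff] at hx
  subst hx; rfl

/-- if `D` is a maximal matching among matchings covering `Y`
and avoiding all vertices of `d`-value 0, then `G − D` has no edge with both
endpoints of degree 2, and all its components are `P₁`, `P₂` or `P₃`. -/
theorem stmt_12 {V : Type*} [Fintype V] [DecidableEq V] (G : SimpleGraph V)
    (a d : V → ℕ) (ha : ∀ v, a v ≤ 1) (hd : ∀ v, d v ≤ 1)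
    (hT : TriangleFree G) (hC4 : C4Free G) (hdeg : MaxDegLE G 3)
    (h1 : ∀ v, 2 ≤ ndeg G v → d v = 1)
    (h2 : ∀ v w, ndeg G v = 3 → G.Adj v w → a w ≠ 0)
    (h3 : ∀ v w, ndeg G v = 3 → ndeg G w = 3 → ¬ G.Adj v w)
    (D : SimpleGraph V) (hDG : D ≤ G) (hDM : IsMatchingGraph D)
    (hDY : ∀ y ∈ Yset G a, ∃ w, D.Adj y w)
    (hD0 : ∀ w, d w = 0 → ∀ z, ¬ D.Adj w z)
    (hmax : ∀ D' : SimpleGraph V, D' ≤ G → IsMatchingGraph D' → D ≤ D' →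
      (∀ w, d w = 0 → ∀ z, ¬ D'.Adj w z) → D' = D) :
    (∀ u v, (G \ D).Adj u v →
        ¬ (ndeg (G \ D) u = 2 ∧ ndeg (G \ D) v = 2)) ∧
    (∀ c : (G \ D).ConnectedComponent,
        P1Comp (G \ D) c ∨ P2Comp (G \ D) c ∨
          ∃ u m w, P3Comp (G \ D) c u m w) := by

  -- neighbourhood lemmas
  have hNdel : ∀ v x, D.Adj v x →
      {w | (G \ D).Adj v w} = {w | G.Adj v w} \ {x} := by
    intro v x hvx
    ext w
    simp only [Set.mem_setOf_eq, Set.mem_diff, Set.mem_singleton_iff, SimpleGraph.sdiff_adj]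
    constructor
    · rintro ⟨hg, hnd⟩
      exact ⟨hg, fun h => hnd (h ▸ hvx)⟩
    · rintro ⟨hg, hne⟩
      exact ⟨hg, fun h => hne (hDM h hvx)⟩
  have hdegcov : ∀ v x, D.Adj v x → ndeg (G \ D) v + 1 = ndeg G v := by
    intro v x hvx
    have hx : x ∈ {w | G.Adj v w} := hDG hvx
    rw [ndeg, ndeg, hNdel v x hvx]
    exact Set.ncard_diff_singleton_add_one hx (Set.toFinite _)
  have hdegunc : ∀ v, (∀ x, ¬ D.Adj v x) → ndeg (G \ D) v = ndeg G v := by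
    intro v hv
    rw [ndeg, ndeg]
    congr 1
    ext w
    simp only [Set.mem_setOf_eq, SimpleGraph.sdiff_adj]
    exact ⟨fun h => h.1, fun h => ⟨h, hv w⟩⟩
  -- Part 1
  have part1 : ∀ u v, (G \ D).Adj u v → ¬ (ndeg (G \ D) u = 2 ∧ ndeg (G \ D) v = 2) := by
    rintro u v huv ⟨hu2, hv2⟩
    rw [SimpleGraph.sdiff_adj] at huv
    obtain ⟨hGuv, hnD⟩ := huv
    have key : ∀ x, ndeg (G \ D) x = 2 → ∀ y, D.Adj x y → ndeg G x = 3 := by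
      intro x hx y hy; have := hdegcov x y hy; omega
    have keyu : ∀ x, ndeg (G \ D) x = 2 → (∀ y, ¬ D.Adj x y) → ndeg G x = 2 := by
      intro x hx hun; have := hdegunc x hun; omega
    by_cases cu : ∃ y, D.Adj u y
    · obtain ⟨yu, hyu⟩ := cu
      have hu3 := key u hu2 yu hyu
      by_cases cv : ∃ y, D.Adj v y
      · obtain ⟨yv, hyv⟩ := cv
        exact h3 u v hu3 (key v hv2 yv hyv) hGuv
      · push_neg at cv
        have hvY : v ∈ Yset G a :=
          Set.mem_union_left _ (Set.mem_union_right _ ⟨keyu v hv2 cv, u, hGuv.symm, hu3⟩)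
        obtain ⟨w, hw⟩ := hDY v hvY
        exact cv w hw
    · push_neg at cu
      by_cases cv : ∃ y, D.Adj v y
      · obtain ⟨yv, hyv⟩ := cv
        have hv3 := key v hv2 yv hyv
        have huY : u ∈ Yset G a :=
          Set.mem_union_left _ (Set.mem_union_right _ ⟨keyu u hu2 cu, v, hGuv, hv3⟩)
        obtain ⟨w, hw⟩ := hDY u huY
        exact cu w hw
      · push_neg at cv
        have hu2' := keyu u hu2 cu
        have hv2' := keyu v hv2 cv
        have hdu : d u = 1 := h1 u (by omega)
        have hdv : d v = 1 := h1 v (by omega)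
        have hne : u ≠ v := hGuv.ne
        set E : SimpleGraph V := SimpleGraph.fromEdgeSet {s(u, v)} with hE
        have hEadj : ∀ {x y}, E.Adj x y ↔ ((x = u ∧ y = v) ∨ (x = v ∧ y = u)) := by
          intro x y
          rw [hE, SimpleGraph.fromEdgeSet_adj, Set.mem_singleton_iff, Sym2.eq_iff]
          constructor
          · rintro ⟨(⟨rfl, rfl⟩ | ⟨rfl, rfl⟩), h⟩
            · exact Or.inl ⟨rfl, rfl⟩
            · exact Or.inr ⟨rfl, rfl⟩
          · rintro (⟨rfl, rfl⟩ | ⟨rfl, rfl⟩)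
            · exact ⟨Or.inl ⟨rfl, rfl⟩, hne⟩
            · exact ⟨Or.inr ⟨rfl, rfl⟩, hne.symm⟩
        have hD'adj : ∀ {x y}, (D ⊔ E).Adj x y ↔
            D.Adj x y ∨ ((x = u ∧ y = v) ∨ (x = v ∧ y = u)) := by
          intro x y; rw [SimpleGraph.sup_adj, hEadj]
        have hD'G : D ⊔ E ≤ G := by
          intro x y h
          rcases hD'adj.1 h with h | (⟨rfl, rfl⟩ | ⟨rfl, rfl⟩)
          · exact hDG h
          · exact hGuv
          · exact hGuv.symm
        have hD'M : IsMatchingGraph (D ⊔ E) := by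
          intro x y y' h h'
          rcases hD'adj.1 h with hD1 | hE1
          · rcases hD'adj.1 h' with hD2 | hE2
            · exact hDM hD1 hD2
            · rcases hE2 with ⟨rfl, rfl⟩ | ⟨rfl, rfl⟩
              · exact absurd hD1 (cu _)
              · exact absurd hD1 (cv _)
          · rcases hD'adj.1 h' with hD2 | hE2
            · rcases hE1 with ⟨rfl, rfl⟩ | ⟨rfl, rfl⟩
              · exact absurd hD2 (cu _)
              · exact absurd hD2 (cv _)
            · rcases hE1 with ⟨hx, hy⟩ | ⟨hx, hy⟩ <;>
                rcases hE2 with ⟨hx', hy'⟩ | ⟨hx', hy'⟩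
              · rw [hy, hy']
              · exact absurd (hx.symm.trans hx') hne
              · exact absurd (hx.symm.trans hx') hne.symm
              · rw [hy, hy']
        have hD'0 : ∀ w, d w = 0 → ∀ z, ¬ (D ⊔ E).Adj w z := by
          intro w hw z hz
          rcases hD'adj.1 hz with hz | (⟨rfl, rfl⟩ | ⟨rfl, rfl⟩)
          · exact hD0 w hw z hz
          · omega
          · omega
        have heq := hmax (D ⊔ E) hD'G hD'M le_sup_left hD'0
        have hDE : (D ⊔ E).Adj u v := hD'adj.2 (Or.inr (Or.inl ⟨rfl, rfl⟩))
        rw [heq] at hDE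
        exact hnD hDE
  refine ⟨part1, ?_⟩
  -- max degree of G \ D is at most 2
  have hH2 : ∀ v, ndeg (G \ D) v ≤ 2 := by
    intro v
    by_cases cv : ∃ y, D.Adj v y
    · obtain ⟨y, hy⟩ := cv
      have h1' := hdegcov v y hy
      have h2' := hdeg v
      omega
    · push_neg at cv
      have he := hdegunc v cv
      by_contra hcon
      have hv3 : ndeg G v = 3 := by have := hdeg v; omega
      obtain ⟨w, hw⟩ := hDY v (Set.mem_union_right _ hv3)
      exact cv w hw
  -- degree-1 characterization
  have hdeg1 : ∀ x y, (G \ D).Adj x y → ndeg (G \ D) x ≠ 2 →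
      {w | (G \ D).Adj x w} = {y} := by
    intro x y hxy h2
    have hmem : y ∈ {w | (G \ D).Adj x w} := hxy
    have hpos : 0 < ndeg (G \ D) x := by
      rw [ndeg]
      exact (Set.ncard_pos (Set.toFinite _)).2 ⟨y, hmem⟩
    have h1' : ndeg (G \ D) x = 1 := by have := hH2 x; omega
    exact aux_single h1' hmem
  intro c
  obtain ⟨u₀, rfl⟩ := c.exists_rep
  by_cases h0 : ∃ m, (G \ D).Adj u₀ m
  · obtain ⟨m, hm⟩ := h0
    by_cases hu₀2 : ndeg (G \ D) u₀ = 2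
    · -- u₀ is the middle of a P₃
      have hu₀2' : {w | (G \ D).Adj u₀ w}.ncard = 2 := hu₀2
      obtain ⟨w, hw_ne, hset⟩ := aux_pair hu₀2' (show m ∈ {w | (G \ D).Adj u₀ w} from hm)
      have hw : (G \ D).Adj u₀ w := by
        have : w ∈ {w' | (G \ D).Adj u₀ w'} := by rw [hset]; simp
        exact this
      have hm1 : {w' | (G \ D).Adj m w'} = {u₀} :=
        hdeg1 m u₀ hm.symm (fun h => part1 m u₀ hm.symm ⟨h, hu₀2⟩)
      have hw1 : {w' | (G \ D).Adj w w'} = {u₀} :=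
        hdeg1 w u₀ hw.symm (fun h => part1 w u₀ hw.symm ⟨h, hu₀2⟩)
      refine Or.inr (Or.inr ⟨m, u₀, w, hm.symm, hw, hw_ne.symm, ?_, ?_⟩)
      · intro hc
        have hmem : w ∈ ({u₀} : Set V) := hm1 ▸ hc
        exact hw.ne' hmem
      · refine aux_supp_eq (by simp) ?_ ?_
        · intro x hx y hy
          simp only [Set.mem_insert_iff, Set.mem_singleton_iff] at hx
          rcases hx with rfl | rfl | rfl
          · have : y ∈ ({u₀} : Set V) := hm1 ▸ hy
            simp only [Set.mem_singleton_iff] at this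
            simp [this]
          · have : y ∈ ({m, w} : Set V) := hset ▸ hy
            simp only [Set.mem_insert_iff, Set.mem_singleton_iff] at this
            rcases this with rfl | rfl <;> simp
          · have : y ∈ ({u₀} : Set V) := hw1 ▸ hy
            simp only [Set.mem_singleton_iff] at this
            simp [this]
        · intro s hs
          simp only [Set.mem_insert_iff, Set.mem_singleton_iff] at hs
          rcases hs with rfl | rfl | rfl
          · exact hm.reachable
          · exact SimpleGraph.Reachable.refl _
          · exact hw.reachable
    · -- u₀ has degree 1 with neighbour m
      have hu₀1 : {w' | (G \ D).Adj u₀ w'} = {m} := hdeg1 u₀ m hm hu₀2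
      by_cases hm2 : ndeg (G \ D) m = 2
      · -- m is the middle of a P₃
        have hm2' : {w' | (G \ D).Adj m w'}.ncard = 2 := hm2
        obtain ⟨w, hw_ne, hset⟩ :=
          aux_pair hm2' (show u₀ ∈ {w' | (G \ D).Adj m w'} from hm.symm)
        have hmw : (G \ D).Adj m w := by
          have : w ∈ {w' | (G \ D).Adj m w'} := by rw [hset]; simp
          exact this
        have hw1 : {w' | (G \ D).Adj w w'} = {m} :=
          hdeg1 w m hmw.symm (fun h => part1 w m hmw.symm ⟨h, hm2⟩)
        refine Or.inr (Or.inr ⟨u₀, m, w, hm, hmw, hw_ne.symm, ?_, ?_⟩)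
        · intro hc
          have hmem : w ∈ ({m} : Set V) := hu₀1 ▸ hc
          exact hmw.ne' hmem
        · refine aux_supp_eq (by simp) ?_ ?_
          · intro x hx y hy
            simp only [Set.mem_insert_iff, Set.mem_singleton_iff] at hx
            rcases hx with rfl | rfl | rfl
            · have : y ∈ ({m} : Set V) := hu₀1 ▸ hy
              simp only [Set.mem_singleton_iff] at this
              simp [this]
            · have : y ∈ ({u₀, w} : Set V) := hset ▸ hy
              simp only [Set.mem_insert_iff, Set.mem_singleton_iff] at this
              rcases this with rfl | rfl <;> simp
            · have : y ∈ ({m} : Set V) := hw1 ▸ hy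
              simp only [Set.mem_singleton_iff] at this
              simp [this]
          · intro s hs
            simp only [Set.mem_insert_iff, Set.mem_singleton_iff] at hs
            rcases hs with rfl | rfl | rfl
            · exact SimpleGraph.Reachable.refl _
            · exact hm.reachable
            · exact hm.reachable.trans hmw.reachable
      · -- component is a P₂
        have hm1 : {w' | (G \ D).Adj m w'} = {u₀} := hdeg1 m u₀ hm.symm hm2
        refine Or.inr (Or.inl ⟨u₀, m, hm, ?_⟩)
        refine aux_supp_eq (by simp) ?_ ?_
        · intro x hx y hy
          simp only [Set.mem_insert_iff, Set.mem_singleton_iff] at hx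
          rcases hx with rfl | rfl
          · have : y ∈ ({m} : Set V) := hu₀1 ▸ hy
            simp only [Set.mem_singleton_iff] at this
            simp [this]
          · have : y ∈ ({u₀} : Set V) := hm1 ▸ hy
            simp only [Set.mem_singleton_iff] at this
            simp [this]
        · intro s hs
          simp only [Set.mem_insert_iff, Set.mem_singleton_iff] at hs
          rcases hs with rfl | rfl
          · exact SimpleGraph.Reachable.refl _
          · exact hm.reachable
  · -- P₁ component
    push_neg at h0
    refine Or.inl ⟨u₀, ?_⟩
    refine aux_supp_eq rfl ?_ ?_
    · intro x hx y hy
      simp only [Set.mem_singleton_iff] at hx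
      subst hx
      exact absurd hy (h0 y)
    · intro s hs
      simp only [Set.mem_singleton_iff] at hs
      subst hs
      exact SimpleGraph.Reachable.refl _
end

section
/- Let G be a triangle-free graph of maximum degree at most 3, and suppose D is a matching in G and A is a matching in the complement of G such that G − D + A is a disjoint union of complete graphs. Then every connected component of G − D is isomorphic to P₁, P₂, P₃, or C₄; moreover, components isomorphic to P₃ become K₃ and components isomorphic to C₄ become K₄ in G − D + A. -/
open SimpleGraph

variable {V : Type*}

section Aux
variable {W : Type*}

lemma walk_mem' {H : SimpleGraph W} {T : Set W}
    (hclosed : ∀ x ∈ T, ∀ ⦃y⦄, H.Adj x y → y ∈ T)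
    {a b : W} (p : H.Walk a b) (ha : a ∈ T) : b ∈ T := by
  induction p with
  | nil => exact ha
  | cons h _ ih => exact ih (hclosed _ ha h)

lemma supp_eq_of' {H : SimpleGraph W} (v : W) (T : Set W) (hv : v ∈ T)
    (hreach : ∀ x ∈ T, H.Reachable v x)
    (hclosed : ∀ x ∈ T, ∀ ⦃y⦄, H.Adj x y → y ∈ T) :
    (H.connectedComponentMk v).supp = T := by
  ext w
  simp only [ConnectedComponent.mem_supp_iff, ConnectedComponent.eq]
  constructor
  · intro h
    obtain ⟨p⟩ := h.symm
    exact walk_mem' hclosed p hv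
  · intro hw
    exact (hreach w hw).symm

lemma stmt_aux (H A : SimpleGraph W)
    (hHT : ∀ ⦃u v w : W⦄, H.Adj u v → H.Adj v w → H.Adj u w → False)
    (hAM : IsMatchingGraph A)
    (hsol : IsClusterGraph (H ⊔ A)) :
    GoodComponents H ∧
    (∀ c : H.ConnectedComponent, ∀ u m w, P3Comp H c u m w →
      (H ⊔ A).Adj u w ∧
        ((H ⊔ A).connectedComponentMk m).supp = {u, m, w}) ∧
    (∀ c : H.ConnectedComponent, ∀ p q r s, C4Comp H c p q r s →
      (H ⊔ A).Adj p r ∧ (H ⊔ A).Adj q s ∧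
        ((H ⊔ A).connectedComponentMk p).supp = {p, q, r, s}) := by
  have hSH : ∀ ⦃u v : W⦄, H.Adj u v → (H ⊔ A).Adj u v :=
    fun u v h => (sup_adj _ _ _ _).mpr (Or.inl h)
  have hSA : ∀ ⦃u v : W⦄, A.Adj u v → (H ⊔ A).Adj u v :=
    fun u v h => (sup_adj _ _ _ _).mpr (Or.inr h)
  -- two H-neighbours of a common vertex are A-adjacent
  have key2 : ∀ ⦃m u w : W⦄, H.Adj m u → H.Adj m w → u ≠ w → A.Adj u w := by
    intro m u w h1 h2 huw
    have hS : (H ⊔ A).Adj u w := hsol (hSH h1.symm) (hSH h2) huw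
    rcases (sup_adj _ _ _ _).mp hS with h | h
    · exact absurd h (fun h => hHT h1.symm h2 h)
    · exact h
  -- degree ≤ 2 in H
  have deg2 : ∀ ⦃m u w x : W⦄, H.Adj m u → H.Adj m w → H.Adj m x → u ≠ w →
      x = u ∨ x = w := by
    intro m u w x h1 h2 h3 huw
    by_contra hc
    push_neg at hc
    have hA1 : A.Adj u w := key2 h1 h2 huw
    have hA2 : A.Adj u x := key2 h1 h3 (fun h => hc.1 h.symm)
    exact hc.2 (hAM hA2 hA1)
  -- every P₄ closes into a C₄
  have key3 : ∀ ⦃a b c d : W⦄, H.Adj a b → H.Adj b c → H.Adj c d →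
      a ≠ c → b ≠ d → a ≠ d → H.Adj a d := by
    intro a b c d h1 h2 h3 hac hbd had
    have hAac : A.Adj a c := key2 h1.symm h2 hac
    have hS : (H ⊔ A).Adj a d := hsol (hSA hAac) (hSH h3) had
    rcases (sup_adj _ _ _ _).mp hS with h | h
    · exact h
    · exact absurd (hAM h hAac).symm h3.ne
  refine ⟨?_, ?_, ?_⟩
  · -- GoodComponents
    intro c
    obtain ⟨v, rfl⟩ := c.exists_rep
    by_cases hv : ∃ u, H.Adj v u
    · obtain ⟨u, hvu⟩ := hv
      by_cases hv2 : ∃ w, H.Adj v w ∧ w ≠ u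
      · obtain ⟨w, hvw, hwu⟩ := hv2
        have huw : u ≠ w := Ne.symm hwu
        have hnuw : ¬ H.Adj u w := fun h => hHT hvu h hvw
        by_cases hu2 : ∃ x, H.Adj u x ∧ x ≠ v
        · -- C₄ case
          obtain ⟨x, hux, hxv⟩ := hu2
          have hxu : x ≠ u := hux.ne'
          have hxw : x ≠ w := fun h => hHT hvu (h ▸ hux) hvw
          have hwx : H.Adj w x :=
            key3 hvw.symm hvu hux hwu (Ne.symm hxv) (fun h => hxw h.symm)
          have hnvx : ¬ H.Adj v x :=
            fun h => (deg2 hvu hvw h huw).elim (fun h' => hxu h') (fun h' => hxw h')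
          refine Or.inr (Or.inr (Or.inr ⟨v, u, x, w, hvu, hux, hwx.symm, hvw.symm,
            Ne.symm hxv, huw, hnvx, hnuw, ?_⟩))
          apply supp_eq_of' v {v, u, x, w} (by simp)
          · intro y hy
            simp only [Set.mem_insert_iff, Set.mem_singleton_iff] at hy
            rcases hy with rfl | rfl | rfl | rfl
            · exact Reachable.refl _
            · exact hvu.reachable
            · exact hvu.reachable.trans hux.reachable
            · exact hvw.reachable
          · intro t ht y hy
            simp only [Set.mem_insert_iff, Set.mem_singleton_iff] at ht
            rcases ht with rfl | rfl | rfl | rfl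
            · rcases deg2 hvu hvw hy huw with rfl | rfl
              · simp
              · simp
            · rcases deg2 hvu.symm hux hy (Ne.symm hxv) with rfl | rfl
              · simp
              · simp
            · rcases deg2 hux.symm hwx.symm hy huw with rfl | rfl
              · simp
              · simp
            · rcases deg2 hvw.symm hwx hy (Ne.symm hxv) with rfl | rfl
              · simp
              · simp
        · -- P₃ with middle v : u - v - w
          push_neg at hu2
          have hw2 : ∀ x, H.Adj w x → x = v := by
            intro x hwx
            by_contra hxv
            have hxu : x ≠ u := by
              intro h; subst h
              exact hvw.ne' (hu2 w hwx.symm)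
            have : H.Adj u x :=
              key3 hvu.symm hvw hwx huw (fun h => hxv h.symm) (fun h => hxu h.symm)
            exact hxv (hu2 x this)
          refine Or.inr (Or.inr (Or.inl ⟨u, v, w, hvu.symm, hvw, huw, hnuw, ?_⟩))
          apply supp_eq_of' v {u, v, w} (by simp)
          · intro y hy
            simp only [Set.mem_insert_iff, Set.mem_singleton_iff] at hy
            rcases hy with rfl | rfl | rfl
            · exact hvu.reachable
            · exact Reachable.refl _
            · exact hvw.reachable
          · intro t ht y hy
            simp only [Set.mem_insert_iff, Set.mem_singleton_iff] at ht
            rcases ht with rfl | rfl | rfl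
            · rcases hu2 y hy with rfl; simp
            · rcases deg2 hvu hvw hy huw with rfl | rfl
              · simp
              · simp
            · rcases hw2 y hy with rfl; simp
      · push_neg at hv2
        by_cases hu2 : ∃ x, H.Adj u x ∧ x ≠ v
        · -- P₃ with middle u : v - u - w
          obtain ⟨w, huw, hwv⟩ := hu2
          have hwu : w ≠ u := huw.ne'
          have hvnw : v ≠ w := Ne.symm hwv
          have hnvw : ¬ H.Adj v w := fun h => hwu (hv2 w h)
          have hw2 : ∀ x, H.Adj w x → x = u := by
            intro x hwx
            by_contra hxu
            have hxv : x ≠ v := by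
              intro h; subst h
              exact hwu (hv2 w hwx.symm)
            have : H.Adj v x :=
              key3 hvu huw hwx hvnw (fun h => hxu h.symm) (fun h => hxv h.symm)
            exact hxu (hv2 x this)
          refine Or.inr (Or.inr (Or.inl ⟨v, u, w, hvu, huw, hvnw, hnvw, ?_⟩))
          apply supp_eq_of' v {v, u, w} (by simp)
          · intro y hy
            simp only [Set.mem_insert_iff, Set.mem_singleton_iff] at hy
            rcases hy with rfl | rfl | rfl
            · exact Reachable.refl _
            · exact hvu.reachable
            · exact hvu.reachable.trans huw.reachable
          · intro t ht y hy
            simp only [Set.mem_insert_iff, Set.mem_singleton_iff] at ht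
            rcases ht with rfl | rfl | rfl
            · rcases hv2 y hy with rfl; simp
            · rcases deg2 hvu.symm huw hy hvnw with rfl | rfl
              · simp
              · simp
            · rcases hw2 y hy with rfl; simp
        · -- P₂
          push_neg at hu2
          refine Or.inr (Or.inl ⟨v, u, hvu, ?_⟩)
          apply supp_eq_of' v {v, u} (by simp)
          · intro y hy
            simp only [Set.mem_insert_iff, Set.mem_singleton_iff] at hy
            rcases hy with rfl | rfl
            · exact Reachable.refl _
            · exact hvu.reachable
          · intro t ht y hy
            simp only [Set.mem_insert_iff, Set.mem_singleton_iff] at ht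
            rcases ht with rfl | rfl
            · rcases hv2 y hy with rfl; simp
            · rcases hu2 y hy with rfl; simp
    · -- P₁
      push_neg at hv
      refine Or.inl ⟨v, ?_⟩
      apply supp_eq_of' v {v} (by simp)
      · intro y hy
        simp only [Set.mem_singleton_iff] at hy
        subst hy
        exact Reachable.refl _
      · intro t ht y hy
        simp only [Set.mem_singleton_iff] at ht
        subst ht
        exact absurd hy (hv y)
  · -- P₃ components become triangles
    intro c u m w hP
    obtain ⟨h1, h2, h3, h4, h5⟩ := hP
    have hAuw : A.Adj u w := key2 h1.symm h2 h3
    have hmemH : ∀ ⦃t y : W⦄, t ∈ ({u, m, w} : Set W) → H.Adj t y →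
        y ∈ ({u, m, w} : Set W) := by
      intro t y ht hty
      have ht' : t ∈ c.supp := by rw [h5]; exact ht
      have htc : H.connectedComponentMk t = c := (ConnectedComponent.mem_supp_iff _ _).mp ht'
      have hyc : H.connectedComponentMk y = c :=
        (ConnectedComponent.sound hty.symm.reachable).trans htc
      have : y ∈ c.supp := (ConnectedComponent.mem_supp_iff _ _).mpr hyc
      rwa [h5] at this
    refine ⟨hSA hAuw, ?_⟩
    apply supp_eq_of' m {u, m, w} (by simp)
    · intro y hy
      simp only [Set.mem_insert_iff, Set.mem_singleton_iff] at hy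
      rcases hy with rfl | rfl | rfl
      · exact (hSH h1.symm).reachable
      · exact Reachable.refl _
      · exact (hSH h2).reachable
    · intro t ht y hy
      simp only [Set.mem_insert_iff, Set.mem_singleton_iff] at ht
      rcases ht with rfl | ht2 | rfl
      · rcases (sup_adj _ _ _ _).mp hy with h | h
        · exact hmemH (by simp) h
        · rcases hAM h hAuw with rfl; simp
      · rw [ht2] at hy
        rcases (sup_adj _ _ _ _).mp hy with h | h
        · exact hmemH (by simp) h
        · -- A.Adj m y
          by_cases hyu : y = u
          · subst hyu; simp
          by_cases hym : y = m
          · subst hym; simp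
          by_cases hyw : y = w
          · subst hyw; simp
          exfalso
          have hS : (H ⊔ A).Adj u y :=
            hsol (hSH h1) (hSA h) (fun e => hyu e.symm)
          rcases (sup_adj _ _ _ _).mp hS with h' | h'
          · have := hmemH (show u ∈ ({u, m, w} : Set W) by simp) h'
            simp only [Set.mem_insert_iff, Set.mem_singleton_iff] at this
            rcases this with rfl | rfl | rfl
            · exact hyu rfl
            · exact hym rfl
            · exact hyw rfl
          · exact hyw (hAM h' hAuw)
      · rcases (sup_adj _ _ _ _).mp hy with h | h
        · exact hmemH (by simp) h
        · rcases hAM h hAuw.symm with rfl; simp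
  · -- C₄ components become K₄s
    intro c p q r s hC
    obtain ⟨h1, h2, h3, h4, hpr, hqs, hnpr, hnqs, h5⟩ := hC
    have hApr : A.Adj p r := key2 h1.symm h2 hpr
    have hAqs : A.Adj q s := key2 h2.symm h3 hqs
    have hmemH : ∀ ⦃t y : W⦄, t ∈ ({p, q, r, s} : Set W) → H.Adj t y →
        y ∈ ({p, q, r, s} : Set W) := by
      intro t y ht hty
      have ht' : t ∈ c.supp := by rw [h5]; exact ht
      have htc : H.connectedComponentMk t = c := (ConnectedComponent.mem_supp_iff _ _).mp ht'
      have hyc : H.connectedComponentMk y = c :=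
        (ConnectedComponent.sound hty.symm.reachable).trans htc
      have : y ∈ c.supp := (ConnectedComponent.mem_supp_iff _ _).mpr hyc
      rwa [h5] at this
    refine ⟨hSA hApr, hSA hAqs, ?_⟩
    apply supp_eq_of' p {p, q, r, s} (by simp)
    · intro y hy
      simp only [Set.mem_insert_iff, Set.mem_singleton_iff] at hy
      rcases hy with rfl | rfl | rfl | rfl
      · exact Reachable.refl _
      · exact (hSH h1).reachable
      · exact (hSA hApr).reachable
      · exact (hSH h4.symm).reachable
    · intro t ht y hy
      simp only [Set.mem_insert_iff, Set.mem_singleton_iff] at ht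
      rcases ht with rfl | rfl | rfl | rfl
      · rcases (sup_adj _ _ _ _).mp hy with h | h
        · exact hmemH (by simp) h
        · rcases hAM h hApr with rfl; simp
      · rcases (sup_adj _ _ _ _).mp hy with h | h
        · exact hmemH (by simp) h
        · rcases hAM h hAqs with rfl; simp
      · rcases (sup_adj _ _ _ _).mp hy with h | h
        · exact hmemH (by simp) h
        · rcases hAM h hApr.symm with rfl; simp
      · rcases (sup_adj _ _ _ _).mp hy with h | h
        · exact hmemH (by simp) h
        · rcases hAM h hAqs.symm with rfl; simp
end Aux

/-- if `(G − D) + A` is a cluster graph (G triangle-free, max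
degree ≤ 3, D and A matchings), then every component of `G − D` is `P₁`, `P₂`,
`P₃` or `C₄`; the `P₃` components become `K₃`s and the `C₄` components become
`K₄`s of the solution. -/
theorem stmt_15 {V : Type*} [Fintype V] [DecidableEq V] (G D A : SimpleGraph V)
    (hT : TriangleFree G) (hdeg : MaxDegLE G 3)
    (hDG : D ≤ G) (hDM : IsMatchingGraph D)
    (hAG : A ≤ Gᶜ) (hAM : IsMatchingGraph A)
    (hsol : IsClusterGraph ((G \ D) ⊔ A)) :
    GoodComponents (G \ D) ∧
    (∀ c : (G \ D).ConnectedComponent, ∀ u m w, P3Comp (G \ D) c u m w →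
      ((G \ D) ⊔ A).Adj u w ∧
        (((G \ D) ⊔ A).connectedComponentMk m).supp = {u, m, w}) ∧
    (∀ c : (G \ D).ConnectedComponent, ∀ p q r s, C4Comp (G \ D) c p q r s →
      ((G \ D) ⊔ A).Adj p r ∧ ((G \ D) ⊔ A).Adj q s ∧
        (((G \ D) ⊔ A).connectedComponentMk p).supp = {p, q, r, s}) := by
  have hle : G \ D ≤ G := sdiff_le
  exact stmt_aux (G \ D) A
    (fun u v w h1 h2 h3 => hT (hle h1) (hle h2) (hle h3)) hAM hsol
end

section
/- Let G be a graph with vertex weights a*, d*: V(G) → {0,1} and suppose there is an edge uw ∈ E(G) with deg(u) = deg(w) = 3, where G is {C₃,C₄}-free of maximum degree at most 3. If (G, a*, d*) is a YES-instance of (1,1)-Cluster Editing witnessed by matchings D and A, then uw ∈ D (and in particular d*(u) = d*(w) = 1). -/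
open SimpleGraph

variable {V : Type*}

lemma exists_nbr' {V : Type*} [Fintype V] {G D : SimpleGraph V}
    (hM : IsMatchingGraph D) {u : V} (w : V) (hu : ndeg G u = 3) :
    ∃ x, G.Adj u x ∧ x ≠ w ∧ ¬ D.Adj u x := by
  by_contra h
  push_neg at h
  obtain ⟨p, q, r, hpq, hpr, hqr, hset⟩ := Set.ncard_eq_three.mp hu
  have hp : G.Adj u p := by
    have : p ∈ ({p, q, r} : Set V) := by simp
    rw [← hset] at this; exact this
  have hq : G.Adj u q := by
    have : q ∈ ({p, q, r} : Set V) := by simp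
    rw [← hset] at this; exact this
  have hr : G.Adj u r := by
    have : r ∈ ({p, q, r} : Set V) := by simp
    rw [← hset] at this; exact this
  have key : ∀ x y, G.Adj u x → G.Adj u y → x ≠ w → y ≠ w → x = y :=
    fun x y hx hy hxw hyw => hM (h x hx hxw) (h y hy hyw)
  by_cases hpw : p = w
  · exact hqr (key q r hq hr (fun e => hpq (hpw.trans e.symm))
      (fun e => hpr (hpw.trans e.symm)))
  · by_cases hqw : q = w
    · exact hpr (key p r hp hr hpw (fun e => hqr (hqw.trans e.symm)))
    · exact hpq (key p q hp hq hpw hqw)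

/-- in a {C₃,C₄}-free graph of max degree ≤ 3, an edge between
two degree-3 vertices must be deleted in any solution. -/
theorem stmt_16 {V : Type*} [Fintype V] [DecidableEq V] (G D A : SimpleGraph V)
    (a d : V → ℕ) (ha : ∀ v, a v ≤ 1) (hd : ∀ v, d v ≤ 1)
    (hT : TriangleFree G) (hC4 : C4Free G) (hdeg : MaxDegLE G 3)
    (u w : V) (huw : G.Adj u w) (hu : ndeg G u = 3) (hw : ndeg G w = 3)
    (hD : DelMatching G D d) (hA : AddMatching G A a)
    (hsol : IsClusterGraph ((G \ D) ⊔ A)) :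
    D.Adj u w ∧ d u = 1 ∧ d w = 1 := by
  obtain ⟨hDG, hDm, hDd⟩ := hD
  obtain ⟨hAG, hAm, hAa⟩ := hA
  have hDuw : D.Adj u w := by
    by_contra hnd
    obtain ⟨x, hux, hxw, hDux⟩ := exists_nbr' hDm w hu
    obtain ⟨y, hwy, hyu, hDwy⟩ := exists_nbr' hDm u hw
    have hHuw : ((G \ D) ⊔ A).Adj u w := Or.inl ⟨huw, hnd⟩
    have hHux : ((G \ D) ⊔ A).Adj u x := Or.inl ⟨hux, hDux⟩
    have hHwy : ((G \ D) ⊔ A).Adj w y := Or.inl ⟨hwy, hDwy⟩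
    have hGwx : ¬ G.Adj w x := fun h => hT huw h hux
    have hGuy : ¬ G.Adj u y := fun h => hT huw hwy h
    have hxy : x ≠ y := fun e => hGwx (e ▸ hwy)
    have hGxy : ¬ G.Adj x y := fun h =>
      hC4 (Ne.symm hyu) hxw hux h hwy.symm huw.symm
    have hHxw : ((G \ D) ⊔ A).Adj x w := hsol hHux.symm hHuw hxw
    have hHxy : ((G \ D) ⊔ A).Adj x y := hsol hHxw hHwy hxy
    have hAxw : A.Adj x w := by
      rcases hHxw with h | h
      · exact absurd h.1.symm hGwx
      · exact h
    have hAxy : A.Adj x y := by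
      rcases hHxy with h | h
      · exact absurd h.1 hGxy
      · exact h
    exact hwy.ne (hAm hAxw hAxy)
  exact ⟨hDuw, (hDd hDuw).1, (hDd hDuw).2⟩
end

section
/- Let G be a {C₃,C₄}-free graph with maximum degree at most 3 and vertex weights a*, d*, and suppose uw ∈ E(G) where deg(u) = 3 and a*(w) = 0. If (G, a*, d*) is a YES-instance of (1,1)-Cluster Editing witnessed by matchings D and A, then uw ∈ D. -/
open SimpleGraph

variable {V : Type*}

/-! Every neighbour `w` of a vertex `u` of degree 3 that is kept in a solution is
clustered together with a second kept neighbour `z` of `u` (the deleted edges at `u`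
form a matching, so at most one of the two other neighbours is lost). The edge `wz`
cannot be an edge of the triangle-free graph `G`, so it must be added, forcing
`a w = 1`. -/

lemma exists_two_adj_ne_of_two_lt_ndeg {G : SimpleGraph V} {u : V} (hu : 2 < ndeg G u)
    (w : V) : ∃ z₁ z₂, z₁ ≠ z₂ ∧ G.Adj u z₁ ∧ G.Adj u z₂ ∧ z₁ ≠ w ∧ z₂ ≠ w := by
  have hfin : {x | G.Adj u x}.Finite := Set.finite_of_ncard_pos (by unfold ndeg at hu; omega)
  have hcard : 1 < ({x | G.Adj u x} \ {w}).ncard := by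
    have := Set.pred_ncard_le_ncard_sdiff_singleton {x | G.Adj u x} w
    unfold ndeg at hu
    omega
  obtain ⟨z₁, z₂, ⟨hz₁, hz₁w⟩, ⟨hz₂, hz₂w⟩, hne⟩ := (Set.one_lt_ncard_iff hfin.sdiff).mp hcard
  exact ⟨z₁, z₂, hne, hz₁, hz₂, hz₁w, hz₂w⟩

lemma IsMatchingGraph.exists_adj_ne_not_adj {G M : SimpleGraph V} (hM : IsMatchingGraph M)
    {u : V} (hu : 2 < ndeg G u) (w : V) : ∃ z, G.Adj u z ∧ z ≠ w ∧ ¬ M.Adj u z := by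
  obtain ⟨z₁, z₂, hne, hz₁, hz₂, hz₁w, hz₂w⟩ := exists_two_adj_ne_of_two_lt_ndeg hu w
  by_cases hM₁ : M.Adj u z₁
  · exact ⟨z₂, hz₂, hz₂w, fun hM₂ => hne (hM hM₁ hM₂)⟩
  · exact ⟨z₁, hz₁, hz₁w, hM₁⟩

theorem stmt_17_general {V : Type*} (G D A : SimpleGraph V)
    (a d : V → ℕ)
    (hT : TriangleFree G)
    (u w : V) (huw : G.Adj u w) (hu : ndeg G u = 3) (hw : a w = 0)
    (hD : DelMatching G D d) (hA : AddMatching G A a)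
    (hsol : IsClusterGraph ((G \ D) ⊔ A)) :
    D.Adj u w := by
  by_contra huwD
  obtain ⟨z, huz, hzw, huzD⟩ := hD.2.1.exists_adj_ne_not_adj (G := G) (by rw [hu]; norm_num) w
  have hwz : ((G \ D) ⊔ A).Adj w z :=
    hsol (Or.inl ⟨huw.symm, fun h => huwD h.symm⟩) (Or.inl ⟨huz, huzD⟩) hzw.symm
  rcases hwz with ⟨hwz, -⟩ | hwz
  · exact hT huw hwz huz
  · have := (hA.2.2 hwz).1
    omega

/-- in a {C₃,C₄}-free graph of max degree ≤ 3, an edge from a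
degree-3 vertex to a vertex of `a`-value 0 must be deleted in any solution. -/
theorem stmt_17 {V : Type*} [Fintype V] [DecidableEq V] (G D A : SimpleGraph V)
    (a d : V → ℕ) (ha : ∀ v, a v ≤ 1) (hd : ∀ v, d v ≤ 1)
    (hT : TriangleFree G) (hC4 : C4Free G) (hdeg : MaxDegLE G 3)
    (u w : V) (huw : G.Adj u w) (hu : ndeg G u = 3) (hw : a w = 0)
    (hD : DelMatching G D d) (hA : AddMatching G A a)
    (hsol : IsClusterGraph ((G \ D) ⊔ A)) :
    D.Adj u w :=
  stmt_17_general G D A a d hT u w huw hu hw hD hA hsol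
end

section
/- Let G be a triangle-free graph of maximum degree at most 3 with vertex weights a*, d*, containing a 4-cycle C = v₁v₂v₃v₄v₁ where all four vᵢ have degree 3 with distinct outside neighbours w₁,...,w₄, and suppose w₁w₂ ∉ E(G). If (G, a*, d*) is a YES-instance witnessed by D and A, then it is not the case that v₂v₃ ∈ D and v₄v₁ ∈ D while v₁v₂, v₃v₄, v₁w₁, v₂w₂ ∉ D. -/
open SimpleGraph

variable {V : Type*}

/-- Option (iii) cannot occur when `w₁w₂ ∉ E(G)`. -/
theorem stmt_19 {V : Type*} [Fintype V] [DecidableEq V] (G D A : SimpleGraph V)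
    (a d : V → ℕ) (ha : ∀ v, a v ≤ 1) (hd : ∀ v, d v ≤ 1)
    (hT : TriangleFree G) (hdeg : MaxDegLE G 3)
    (v₁ v₂ v₃ v₄ w₁ w₂ w₃ w₄ : V)
    (h12 : G.Adj v₁ v₂) (h23 : G.Adj v₂ v₃) (h34 : G.Adj v₃ v₄)
    (h41 : G.Adj v₄ v₁)
    (hd1 : ndeg G v₁ = 3) (hd2 : ndeg G v₂ = 3) (hd3 : ndeg G v₃ = 3)
    (hd4 : ndeg G v₄ = 3)
    (hw1 : G.Adj v₁ w₁ ∧ w₁ ∉ ({v₁, v₂, v₃, v₄} : Set V))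
    (hw2 : G.Adj v₂ w₂ ∧ w₂ ∉ ({v₁, v₂, v₃, v₄} : Set V))
    (hw3 : G.Adj v₃ w₃ ∧ w₃ ∉ ({v₁, v₂, v₃, v₄} : Set V))
    (hw4 : G.Adj v₄ w₄ ∧ w₄ ∉ ({v₁, v₂, v₃, v₄} : Set V))
    (hdist : List.Pairwise (· ≠ ·) [v₁, v₂, v₃, v₄, w₁, w₂, w₃, w₄])
    (hnw : ¬ G.Adj w₁ w₂)
    (hD : DelMatching G D d) (hA : AddMatching G A a)
    (hsol : IsClusterGraph ((G \ D) ⊔ A)) :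
    ¬ (D.Adj v₂ v₃ ∧ D.Adj v₄ v₁ ∧ ¬ D.Adj v₁ v₂ ∧ ¬ D.Adj v₃ v₄ ∧
        ¬ D.Adj v₁ w₁ ∧ ¬ D.Adj v₂ w₂) := by
  rintro ⟨h23D, h41D, hn12, hn34, hnw1D, hnw2D⟩
  simp only [List.pairwise_cons, List.mem_cons, List.mem_singleton,
    List.not_mem_nil, or_false] at hdist
  have hw1v2 : w₁ ≠ v₂ := fun h => hdist.2.1 w₁ (by simp) h.symm
  have hw1w2 : w₁ ≠ w₂ := hdist.2.2.2.2.1 w₂ (by simp)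
  have hv2w2 : v₂ ≠ w₂ := hdist.2.1 w₂ (by simp)
  have H12 : ((G \ D) ⊔ A).Adj v₁ v₂ := Or.inl ⟨h12, hn12⟩
  have H1w1 : ((G \ D) ⊔ A).Adj v₁ w₁ := Or.inl ⟨hw1.1, hnw1D⟩
  have H2w2 : ((G \ D) ⊔ A).Adj v₂ w₂ := Or.inl ⟨hw2.1, hnw2D⟩
  have Hw1v2 : ((G \ D) ⊔ A).Adj w₁ v₂ := hsol H1w1.symm H12 hw1v2
  have Hw1w2 : ((G \ D) ⊔ A).Adj w₁ w₂ := hsol Hw1v2 H2w2 hw1w2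
  have Aw1v2 : A.Adj w₁ v₂ := by
    cases Hw1v2 with
    | inl h => exact absurd h.1 (fun hg => hT h12 hg.symm hw1.1)
    | inr h => exact h
  have Aw1w2 : A.Adj w₁ w₂ := by
    cases Hw1w2 with
    | inl h => exact absurd h.1 hnw
    | inr h => exact h
  exact hv2w2 (hA.2.1 Aw1v2 Aw1w2)
end
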